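/- arXiv:2007.12753 — 7 statements merged into one kernel-verified Lean document; each statement's English description precedes it below -/
import Mathlib

section
/- Let $(X,\mu)$ and $(Y,\nu)$ be probability spaces, let $\lambda = \mu \times \nu$, and let $E \subseteq X \times Y$ be measurable with $\lambda(E) > 0$. Define $\tilde E = \{x \in X : \nu(\{y : (x,y) \in E\}) \ge \tfrac12 \lambda(E)\}$. Then there exists $y_0 \in Y$ such that $\lambda(\{(x,y) \in E : x \in \tilde E \text{ and } (x,y_0) \in E\}) \ge \tfrac18 \lambda(E)^2$. -/
/-!
Let `f x = ν (E_x)`, so that `∫ f dμ = λ(E) =: a`, and let `T = {f ≥ a / 2}`. As `f < a / 2` off `T`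
and `μ` is a probability measure, `∫_T f dμ ≥ a / 2`. By Fubini, the average over `y₀` of
`λ {(x, y) ∈ E | x ∈ T, (x, y₀) ∈ E}` is `∫_T f² dμ ≥ (a / 2) ∫_T f dμ ≥ a² / 4`, so some `y₀`
attains at least `a² / 4`.
-/

open MeasureTheory
open scoped ENNReal

namespace MeasureTheory

variable {X Y : Type*} [MeasurableSpace X] [MeasurableSpace Y] {μ : Measure X} {ν : Measure Y}

theorem lintegral_le_setLIntegral_ge_add {f : X → ℝ≥0∞} (hf : Measurable f) (c : ℝ≥0∞) :
    ∫⁻ x, f x ∂μ ≤ ∫⁻ x in {x | c ≤ f x}, f x ∂μ + c * μ {x | f x < c} := by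
  have hcompl : {x | c ≤ f x}ᶜ = {x | f x < c} := by ext; simp
  rw [← lintegral_add_compl f (measurableSet_le measurable_const hf), hcompl,
    ← setLIntegral_const]
  exact add_le_add_right
    (setLIntegral_mono' (measurableSet_lt hf measurable_const) fun x hx => le_of_lt hx) _

theorem half_lintegral_le_setLIntegral_ge_half [IsProbabilityMeasure μ] {f : X → ℝ≥0∞}
    (hf : Measurable f) (hfin : ∫⁻ x, f x ∂μ ≠ ∞) :
    (∫⁻ x, f x ∂μ) / 2 ≤ ∫⁻ x in {x | (∫⁻ x, f x ∂μ) / 2 ≤ f x}, f x ∂μ := by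
  set a := ∫⁻ x, f x ∂μ
  refine (ENNReal.add_le_add_iff_right (ENNReal.div_ne_top hfin two_ne_zero)).mp ?_
  calc a / 2 + a / 2 = a := ENNReal.add_halves a
    _ ≤ ∫⁻ x in {x | a / 2 ≤ f x}, f x ∂μ + a / 2 * μ {x | f x < a / 2} :=
        lintegral_le_setLIntegral_ge_add hf _
    _ ≤ ∫⁻ x in {x | a / 2 ≤ f x}, f x ∂μ + a / 2 := by
        gcongr; exact mul_le_of_le_one_right' prob_le_one

theorem mul_setLIntegral_le_setLIntegral_mul_self {f : X → ℝ≥0∞} (hf : Measurable f)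
    (c : ℝ≥0∞) :
    c * ∫⁻ x in {x | c ≤ f x}, f x ∂μ ≤ ∫⁻ x in {x | c ≤ f x}, f x * f x ∂μ := by
  rw [← lintegral_const_mul c hf]
  exact setLIntegral_mono' (measurableSet_le measurable_const hf) fun x hx => by gcongr; exact hx

variable [SFinite μ] [SFinite ν]

theorem Measure.prod_apply_inter_prod_univ {E : Set (X × Y)} (hE : MeasurableSet E) (A : Set X) :
    (μ.prod ν) (E ∩ A ×ˢ Set.univ) = ∫⁻ x in A, ν (Prod.mk x ⁻¹' E) ∂μ := by
  rw [← Measure.restrict_apply hE, ← Measure.restrict_univ (μ := ν), ← Measure.prod_restrict,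
    Measure.restrict_univ, Measure.prod_apply hE]

theorem lintegral_setLIntegral_slice {E : Set (X × Y)} (hE : MeasurableSet E) {g : X → ℝ≥0∞}
    (hg : Measurable g) :
    ∫⁻ y, ∫⁻ x in {x | (x, y) ∈ E}, g x ∂μ ∂ν = ∫⁻ x, g x * ν (Prod.mk x ⁻¹' E) ∂μ := by
  have hG : Measurable (E.indicator (g ∘ Prod.fst)) := (hg.comp measurable_fst).indicator hE
  calc ∫⁻ y, ∫⁻ x in {x | (x, y) ∈ E}, g x ∂μ ∂ν
      = ∫⁻ y, ∫⁻ x, E.indicator (g ∘ Prod.fst) (x, y) ∂μ ∂ν := by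
        congr! 2 with y
        exact (lintegral_indicator (measurable_prodMk_right hE) g).symm
    _ = ∫⁻ x, ∫⁻ y, E.indicator (g ∘ Prod.fst) (x, y) ∂ν ∂μ := by
        rw [← lintegral_prod_symm _ hG.aemeasurable, lintegral_prod _ hG.aemeasurable]
    _ = ∫⁻ x, g x * ν (Prod.mk x ⁻¹' E) ∂μ :=
        lintegral_congr fun x => lintegral_indicator_const (measurable_prodMk_left hE) (g x)

end MeasureTheory

theorem stmt0_general {X Y : Type*} [MeasurableSpace X] [MeasurableSpace Y]
    (μ : Measure X) (ν : Measure Y) [IsProbabilityMeasure μ] [IsProbabilityMeasure ν]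
    (E : Set (X × Y)) (hE : MeasurableSet E) :
    ∃ y₀ : Y,
      (μ.prod ν) E ^ 2 / 8 ≤
        (μ.prod ν) {p : X × Y | p ∈ E ∧
          (μ.prod ν) E / 2 ≤ ν {y : Y | (p.1, y) ∈ E} ∧ (p.1, y₀) ∈ E} := by
  set a := (μ.prod ν) E
  set f : X → ℝ≥0∞ := fun x => ν (Prod.mk x ⁻¹' E)
  set T := {x | a / 2 ≤ f x}
  let S : Y → Set (X × Y) := fun y₀ => {p | p ∈ E ∧ a / 2 ≤ f p.1 ∧ (p.1, y₀) ∈ E}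
  have hf : Measurable f := measurable_measure_prodMk_left hE
  have ha : ∫⁻ x, f x ∂μ = a := (Measure.prod_apply hE).symm
  have hS : ∀ y₀, (μ.prod ν) (S y₀) = ∫⁻ x in {x | (x, y₀) ∈ E}, f x ∂μ.restrict T := by
    intro y₀
    rw [Measure.restrict_restrict (s := {x | (x, y₀) ∈ E}) (measurable_prodMk_right hE),
      ← Measure.prod_apply_inter_prod_univ hE]
    congr 1
    ext p
    simp only [S, T, Set.mem_ofPred_eq, Set.mem_inter_iff, Set.mem_prod, Set.mem_univ, and_true]
    tauto
  have hmean : a / 2 * (a / 2) ≤ ∫⁻ y₀, (μ.prod ν) (S y₀) ∂ν := by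
    simp_rw [hS, lintegral_setLIntegral_slice hE hf]
    calc a / 2 * (a / 2) ≤ a / 2 * ∫⁻ x in T, f x ∂μ := by
          gcongr
          simpa only [ha] using
            half_lintegral_le_setLIntegral_ge_half hf (ha.trans_ne (measure_ne_top _ _))
      _ ≤ ∫⁻ x in T, f x * f x ∂μ := mul_setLIntegral_le_setLIntegral_mul_self hf _
  have hfin : ∫⁻ y₀, (μ.prod ν) (S y₀) ∂ν ≠ ∞ := ne_top_of_le_ne_top ENNReal.one_ne_top
    ((lintegral_mono fun _ => prob_le_one).trans_eq (by simp))
  obtain ⟨y₀, hy₀⟩ := exists_lintegral_le hfin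
  refine ⟨y₀, le_trans ?_ (hmean.trans hy₀)⟩
  rw [← ENNReal.mul_div_mul_comm (by norm_num) (by norm_num), ← sq]
  exact ENNReal.div_le_div_left (by norm_num) _

theorem stmt0 {X Y : Type*} [MeasurableSpace X] [MeasurableSpace Y]
    (μ : Measure X) (ν : Measure Y) [IsProbabilityMeasure μ] [IsProbabilityMeasure ν]
    (E : Set (X × Y)) (hE : MeasurableSet E) (hpos : 0 < (μ.prod ν) E) :
    ∃ y₀ : Y,
      (μ.prod ν) E ^ 2 / 8 ≤
        (μ.prod ν) {p : X × Y | p ∈ E ∧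
          (μ.prod ν) E / 2 ≤ ν {y : Y | (p.1, y) ∈ E} ∧ (p.1, y₀) ∈ E} :=
  stmt0_general μ ν E hE
end

section
/- Let $f_1, f_2, f_3 : \mathbb{R} \to \mathbb{R}$ be functions satisfying $f_1(x) + f_2(y) + f_3(x+y) = 0$ for all $x, y$ in an open interval (i.e., for all $(x,y)$ in a nonempty open box $U \times V$ with the sum equation holding whenever $x \in U, y \in V$). If $f_1, f_2, f_3$ are continuous, then there exist constants $a, c_1, c_2 \in \mathbb{R}$ such that $f_1(x) = a x + c_1$ on $U$, $f_2(y) = a y + c_2$ on $V$, and $f_3(z) = -a z - c_1 - c_2$ on $U + V$. -/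
/-!
Fixing `y`, the equation gives `f₁ (x + h) - f₁ x = f₂ y - f₂ (y - h) = f₁ x - f₁ (x - h)` for
small `h`, so `f₁` satisfies Jensen's equation locally. By a maximum principle a continuous
solution of the local Jensen equation agrees with its chords, hence is affine. The same holds for
`f₂`; the two slopes agree because `f₃` takes the same value at `(x + h) + y` and `x + (y + h)`,
and then the equation determines `f₃` on `U + V`.
-/

open Set Filter Topology

section

variable {G : Type*} [TopologicalSpace G] [AddGroup G] [IsTopologicalAddGroup G] {s : Set G} {x : G}

theorem eventually_nhds_zero_add_mem (hs : s ∈ 𝓝 x) : ∀ᶠ h in 𝓝 (0 : G), x + h ∈ s :=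
  ((continuous_const_add x).tendsto' 0 x (add_zero x)).eventually hs

theorem eventually_nhds_zero_sub_mem (hs : s ∈ 𝓝 x) : ∀ᶠ h in 𝓝 (0 : G), x - h ∈ s :=
  ((continuous_sub_left x).tendsto' 0 x (sub_zero x)).eventually hs

end

/-- The local form of Jensen's equation `f ((x + y) / 2) = (f x + f y) / 2`. -/
def LocallyJensenOn (f : ℝ → ℝ) (s : Set ℝ) : Prop :=
  ∀ x ∈ s, ∀ᶠ h in 𝓝 (0 : ℝ), f (x + h) + f (x - h) = 2 * f x

namespace LocallyJensenOn

variable {f : ℝ → ℝ} {s : Set ℝ}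

theorem mono {t : Set ℝ} (hf : LocallyJensenOn f s) (hts : t ⊆ s) : LocallyJensenOn f t :=
  fun x hx => hf x (hts hx)

theorem neg (hf : LocallyJensenOn f s) : LocallyJensenOn (fun x => -f x) s :=
  fun x hx => (hf x hx).mono fun h hh => by linarith

theorem sub_affine (hf : LocallyJensenOn f s) (A c : ℝ) :
    LocallyJensenOn (fun x => f x - (A * x + c)) s :=
  fun x hx => (hf x hx).mono fun h hh => by linear_combination hh

/-- Maximum principle: the leftmost maximum point of `f` on `[p, q]` cannot be interior, since
there `f (x - h) < f x` and `f (x + h) ≤ f x` contradict the Jensen equation. -/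
theorem nonpos_on_Icc {p q : ℝ} (hcont : ContinuousOn f (Icc p q))
    (hf : LocallyJensenOn f (Ioo p q)) (hp : f p ≤ 0) (hq : f q ≤ 0) :
    ∀ x ∈ Icc p q, f x ≤ 0 := by
  by_contra! ⟨x₁, hx₁, hfx₁⟩
  obtain ⟨m, hm, hmax⟩ := isCompact_Icc.exists_isMaxOn ⟨x₁, hx₁⟩ hcont
  set S := Icc p q ∩ f ⁻¹' {f m}
  have hS : IsCompact S :=
    isCompact_Icc.of_isClosed_subset
      (hcont.preimage_isClosed_of_isClosed isClosed_Icc isClosed_singleton) inter_subset_left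
  obtain ⟨x, ⟨hx, hfx : f x = f m⟩, hleast⟩ := hS.exists_isLeast ⟨m, hm, rfl⟩
  have hfm : 0 < f m := hfx₁.trans_le (hmax hx₁)
  have hxp : x ≠ p := by rintro rfl; linarith
  have hxq : x ≠ q := by rintro rfl; linarith
  have hxI : x ∈ Ioo p q := ⟨lt_of_le_of_ne hx.1 hxp.symm, lt_of_le_of_ne hx.2 hxq⟩
  have hsmall : ∀ᶠ h in 𝓝 (0 : ℝ), x - h ∈ Icc p q ∧ x + h ∈ Icc p q :=
    (eventually_nhds_zero_sub_mem (Icc_mem_nhds hxI.1 hxI.2)).and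
      (eventually_nhds_zero_add_mem (Icc_mem_nhds hxI.1 hxI.2))
  obtain ⟨h, ⟨hJ, hl, hr⟩, hh : 0 < h⟩ :=
    ((((hf x hxI).and hsmall).filter_mono nhdsWithin_le_nhds).and
      (self_mem_nhdsWithin (s := Ioi 0))).exists
  have hlt : f (x - h) < f m :=
    (hmax hl).lt_of_ne fun heq => by linarith [hleast ⟨hl, heq⟩]
  linarith [show f (x + h) ≤ f m from hmax hr]

theorem exists_affine_on_Icc {p q : ℝ} (hpq : p < q) (hcont : ContinuousOn f (Icc p q))
    (hf : LocallyJensenOn f (Ioo p q)) : ∃ A c : ℝ, ∀ x ∈ Icc p q, f x = A * x + c := by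
  set A := (f q - f p) / (q - p)
  have hA : A * (q - p) = f q - f p := div_mul_cancel₀ _ (sub_ne_zero.mpr hpq.ne')
  set c := f p - A * p
  have hp : f p - (A * p + c) = 0 := by ring
  have hq : f q - (A * q + c) = 0 := by linear_combination -hA
  have hle := nonpos_on_Icc (by fun_prop) (hf.sub_affine A c) hp.le hq.le
  have hge := nonpos_on_Icc (by fun_prop) (hf.sub_affine A c).neg (by simp [hp]) (by simp [hq])
  exact ⟨A, c, fun x hx => by linarith [hle x hx, hge x hx]⟩

theorem exists_affine_on_Ioo {a b : ℝ} (hcont : ContinuousOn f (Ioo a b))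
    (hf : LocallyJensenOn f (Ioo a b)) : ∃ A c : ℝ, ∀ x ∈ Ioo a b, f x = A * x + c := by
  rcases le_or_gt b a with hba | hab
  · exact ⟨0, 0, fun x hx => absurd (hx.1.trans hx.2) hba.not_gt⟩
  have affine_on {p q : ℝ} (hp : a < p) (hpq : p < q) (hq : q < b) :
      ∃ A c : ℝ, ∀ x ∈ Icc p q, f x = A * x + c :=
    have hsub : Icc p q ⊆ Ioo a b := Icc_subset_Ioo hp hq
    exists_affine_on_Icc hpq (hcont.mono hsub) (hf.mono (Ioo_subset_Icc_self.trans hsub))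
  set p₀ := (2 * a + b) / 3 with hp₀_def
  set q₀ := (a + 2 * b) / 3 with hq₀_def
  have hap₀ : a < p₀ := by linarith
  have hp₀q₀ : p₀ < q₀ := by linarith
  have hq₀b : q₀ < b := by linarith
  obtain ⟨A, c, hAc⟩ := affine_on hap₀ hp₀q₀ hq₀b
  refine ⟨A, c, fun x hx => ?_⟩
  -- on a larger interval through `x`, the affine function agrees with `A * x + c` at `p₀ ≠ q₀`
  obtain ⟨A', c', hAc'⟩ := affine_on (p := min p₀ x) (q := max q₀ x)
    (lt_min hap₀ hx.1) (by linarith [min_le_left p₀ x, le_max_left q₀ x])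
    (max_lt hq₀b hx.2)
  have hp₀ : p₀ ∈ Icc (min p₀ x) (max q₀ x) := ⟨min_le_left _ _, by linarith [le_max_left q₀ x]⟩
  have hq₀ : q₀ ∈ Icc (min p₀ x) (max q₀ x) := ⟨by linarith [min_le_left p₀ x], le_max_left _ _⟩
  have e₁ := (hAc' p₀ hp₀).symm.trans (hAc p₀ ⟨le_rfl, hp₀q₀.le⟩)
  have e₂ := (hAc' q₀ hq₀).symm.trans (hAc q₀ ⟨hp₀q₀.le, le_rfl⟩)
  have hA : A' = A := by
    have : (A' - A) * (q₀ - p₀) = 0 := by linear_combination e₂ - e₁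
    linarith [(mul_eq_zero.mp this).resolve_right (sub_ne_zero.mpr hp₀q₀.ne')]
  subst hA
  rw [hAc' x ⟨min_le_right _ _, le_max_right _ _⟩]
  linarith

end LocallyJensenOn

theorem locallyJensenOn_of_add_add_eq_zero {f₁ f₂ f₃ : ℝ → ℝ} {U V : Set ℝ} (hU : IsOpen U)
    (hV : IsOpen V) (hVne : V.Nonempty)
    (heq : ∀ x ∈ U, ∀ y ∈ V, f₁ x + f₂ y + f₃ (x + y) = 0) : LocallyJensenOn f₁ U := by
  obtain ⟨y, hy⟩ := hVne
  intro x hx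
  filter_upwards [eventually_nhds_zero_add_mem (hU.mem_nhds hx),
    eventually_nhds_zero_sub_mem (hU.mem_nhds hx), eventually_nhds_zero_sub_mem (hV.mem_nhds hy)]
    with h hxh hxh' hyh
  have e₁ := heq (x + h) hxh (y - h) hyh
  have e₂ := heq x hx y hy
  have e₃ := heq x hx (y - h) hyh
  have e₄ := heq (x - h) hxh' y hy
  rw [show x + h + (y - h) = x + y by ring] at e₁
  rw [show x - h + y = x + (y - h) by ring] at e₄
  linarith

theorem slope_eq_of_add_add_eq_zero {f₁ f₂ f₃ : ℝ → ℝ} {U V : Set ℝ} (hU : IsOpen U)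
    (hV : IsOpen V) (hUne : U.Nonempty) (hVne : V.Nonempty)
    (heq : ∀ x ∈ U, ∀ y ∈ V, f₁ x + f₂ y + f₃ (x + y) = 0) {A B c₁ c₂ : ℝ}
    (h₁ : ∀ x ∈ U, f₁ x = A * x + c₁) (h₂ : ∀ y ∈ V, f₂ y = B * y + c₂) : A = B := by
  obtain ⟨x, hx⟩ := hUne
  obtain ⟨y, hy⟩ := hVne
  obtain ⟨h, ⟨hxh, hyh⟩, hh : h ≠ 0⟩ :=
    ((((eventually_nhds_zero_add_mem (hU.mem_nhds hx)).and
      (eventually_nhds_zero_add_mem (hV.mem_nhds hy))).filter_mono nhdsWithin_le_nhds).and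
      (self_mem_nhdsWithin (s := {0}ᶜ))).exists
  have e₁ := heq (x + h) hxh y hy
  have e₂ := heq x hx (y + h) hyh
  rw [h₁ _ hxh, h₂ _ hy, show x + h + y = x + (y + h) by ring] at e₁
  rw [h₁ _ hx, h₂ _ hyh] at e₂
  have : (A - B) * h = 0 := by linear_combination e₁ - e₂
  exact sub_eq_zero.mp ((mul_eq_zero.mp this).resolve_right hh)

theorem stmt7_general (a b c d : ℝ) (hab : a < b) (hcd : c < d)
    (f₁ f₂ f₃ : ℝ → ℝ)
    (hc₁ : ContinuousOn f₁ (Set.Ioo a b))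
    (hc₂ : ContinuousOn f₂ (Set.Ioo c d))
    (heq : ∀ x ∈ Set.Ioo a b, ∀ y ∈ Set.Ioo c d, f₁ x + f₂ y + f₃ (x + y) = 0) :
    ∃ A c₁ c₂ : ℝ,
      (∀ x ∈ Set.Ioo a b, f₁ x = A * x + c₁) ∧
      (∀ y ∈ Set.Ioo c d, f₂ y = A * y + c₂) ∧
      (∀ z ∈ Set.image2 (· + ·) (Set.Ioo a b) (Set.Ioo c d),
        f₃ z = -A * z - c₁ - c₂) := by
  have heq' : ∀ y ∈ Ioo c d, ∀ x ∈ Ioo a b, f₂ y + f₁ x + f₃ (y + x) = 0 := fun y hy x hx => by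
    rw [add_comm y, add_comm (f₂ y)]; exact heq x hx y hy
  obtain ⟨A, c₁, h₁⟩ := LocallyJensenOn.exists_affine_on_Ioo hc₁ <|
    locallyJensenOn_of_add_add_eq_zero isOpen_Ioo isOpen_Ioo (nonempty_Ioo.mpr hcd) heq
  obtain ⟨B, c₂, h₂⟩ := LocallyJensenOn.exists_affine_on_Ioo hc₂ <|
    locallyJensenOn_of_add_add_eq_zero isOpen_Ioo isOpen_Ioo (nonempty_Ioo.mpr hab) heq'
  obtain rfl : A = B := slope_eq_of_add_add_eq_zero isOpen_Ioo isOpen_Ioo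
    (nonempty_Ioo.mpr hab) (nonempty_Ioo.mpr hcd) heq h₁ h₂
  refine ⟨A, c₁, c₂, h₁, h₂, ?_⟩
  rintro _ ⟨x, hx, y, hy, rfl⟩
  linear_combination heq x hx y hy - h₁ x hx - h₂ y hy

theorem stmt7 (a b c d : ℝ) (hab : a < b) (hcd : c < d)
    (f₁ f₂ f₃ : ℝ → ℝ)
    (hc₁ : ContinuousOn f₁ (Set.Ioo a b))
    (hc₂ : ContinuousOn f₂ (Set.Ioo c d))
    (hc₃ : ContinuousOn f₃ (Set.image2 (· + ·) (Set.Ioo a b) (Set.Ioo c d)))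
    (heq : ∀ x ∈ Set.Ioo a b, ∀ y ∈ Set.Ioo c d, f₁ x + f₂ y + f₃ (x + y) = 0) :
    ∃ A c₁ c₂ : ℝ,
      (∀ x ∈ Set.Ioo a b, f₁ x = A * x + c₁) ∧
      (∀ y ∈ Set.Ioo c d, f₂ y = A * y + c₂) ∧
      (∀ z ∈ Set.image2 (· + ·) (Set.Ioo a b) (Set.Ioo c d),
        f₃ z = -A * z - c₁ - c₂) :=
  stmt7_general a b c d hab hcd f₁ f₂ f₃ hc₁ hc₂ heq
end

section
/- Let $B \subset \mathbb{R}^D$ be a measurable set of finite measure, $J$ a finite index set, $\psi : B \to \mathbb{R}$ and $\varphi_j : B \to \mathbb{R}^d$ measurable. Suppose there are constants $C_0 < \infty$ and $\gamma > 0$ such that for every $\lambda \in \mathbb{R}$ and all measurable functions $f_j : \mathbb{R}^d \to \mathbb{C}$ with $\|f_j\|_\infty \le 1$, $\left|\int_B e^{i\lambda\psi(x)} \prod_{j \in J} f_j(\varphi_j(x))\,dx\right| \le C_0 (1+|\lambda|)^{-\gamma}$. Then there exist $C < \infty$ and $\tau > 0$ such that for all measurable $g_j : \mathbb{R}^d \to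 \mathbb{R}$ and all $\varepsilon \in (0,1]$, the sublevel set $\mathcal{E} = \{x \in B : |\psi(x) - \sum_{j \in J} g_j(\varphi_j(x))| < \varepsilon\}$ satisfies $|\mathcal{E}| \le C \varepsilon^{\tau}$. -/
/-!
Put `F = ψ - ∑ⱼ gⱼ ∘ φⱼ`. Taking `fⱼ = exp (-i λ gⱼ)` in the hypothesis gives
`|∫_B cos (λ F)| ≤ C₀ (1 + λ)^(-γ)`. The Fejér kernel `K_T(t) = (1 - cos T t) / (T t²)`, which is
`∫₀ᵀ (1 - λ/T) cos (λ t) dλ`, replaces the bump `ζ` of the Fourier-inversion argument: it is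
nonnegative and at least `T/4` where `|t| ≤ 1/T`. With `T = 1/ε` and `τ = min γ (1/2)`, Fubini gives
`(T/4) |E| ≤ ∫_B K_T(F) ≤ C₀ ∫₀ᵀ λ^(-τ) dλ = C₀ T^(1-τ) / (1-τ)`, that is `|E| ≤ 4 C₀ ε^τ / (1-τ)`.
-/

open MeasureTheory

noncomputable def fejerKernel (T t : ℝ) : ℝ :=
  ∫ l in (0 : ℝ)..T, (1 - l / T) * Real.cos (l * t)

lemma fejerKernel_eq {T t : ℝ} (hT : T ≠ 0) (ht : t ≠ 0) :
    fejerKernel T t = (1 - Real.cos (T * t)) / (T * t ^ 2) := by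
  have hderiv : ∀ l : ℝ, HasDerivAt
      (fun l => (1 - l / T) * (Real.sin (l * t) / t) - Real.cos (l * t) / (T * t ^ 2))
      ((1 - l / T) * Real.cos (l * t)) l := by
    intro l
    have hlin : HasDerivAt (fun l : ℝ => l * t) t l := by simpa using (hasDerivAt_id l).mul_const t
    have := ((((hasDerivAt_id l).div_const T).const_sub 1).mul
      ((hlin.sin).div_const t)).sub ((hlin.cos).div_const (T * t ^ 2))
    refine this.congr_deriv ?_
    simp only [id]
    field_simp
    ring
  rw [fejerKernel, intervalIntegral.integral_eq_sub_of_hasDerivAt (fun l _ => hderiv l)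
    (by apply Continuous.intervalIntegrable; fun_prop)]
  field_simp
  simp only [mul_zero, sub_zero, Real.sin_zero, Real.cos_zero]
  ring

lemma one_sub_div_nonneg_of_mem_Icc {T l : ℝ} (hl : l ∈ Set.Icc 0 T) : 0 ≤ 1 - l / T := by
  linarith [div_le_one_of_le₀ hl.2 (hl.1.trans hl.2)]

lemma fejerKernel_nonneg {T : ℝ} (hT : 0 < T) (t : ℝ) : 0 ≤ fejerKernel T t := by
  rcases eq_or_ne t 0 with rfl | ht
  · refine intervalIntegral.integral_nonneg hT.le fun l hl => ?_
    simpa using one_sub_div_nonneg_of_mem_Icc hl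
  · rw [fejerKernel_eq hT.ne' ht]
    have := Real.cos_le_one (T * t)
    apply div_nonneg <;> [linarith; positivity]

lemma quarter_le_fejerKernel {T t : ℝ} (hT : 0 < T) (htT : |t| * T ≤ 1) :
    T / 4 ≤ fejerKernel T t := by
  have hmean : ∫ l in (0 : ℝ)..T, (1 - l / T) * (1 / 2) = T / 4 := by
    rw [intervalIntegral.integral_mul_const, intervalIntegral.integral_sub intervalIntegrable_const
      (intervalIntegral.intervalIntegrable_id.div_const T), intervalIntegral.integral_div,
      integral_id, intervalIntegral.integral_const]
    field_simp
    ring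
  rw [← hmean, fejerKernel]
  refine intervalIntegral.integral_mono_on hT.le (by apply Continuous.intervalIntegrable; fun_prop)
    (by apply Continuous.intervalIntegrable; fun_prop) fun l hl => ?_
  refine mul_le_mul_of_nonneg_left ?_ (one_sub_div_nonneg_of_mem_Icc hl)
  have hlt : (l * t) ^ 2 ≤ 1 := by
    rw [← sq_abs, abs_mul, abs_of_nonneg hl.1]
    have hlt1 : l * |t| ≤ 1 := by nlinarith [abs_nonneg t, hl.2]
    nlinarith [mul_nonneg hl.1 (abs_nonneg t)]
  linarith [Real.one_sub_sq_div_two_le_cos (x := l * t)]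

section
variable {α : Type*} [MeasurableSpace α] {μ : Measure α} [IsFiniteMeasure μ] {F : α → ℝ}

lemma integrable_one_sub_div_mul_cos (hF : Measurable F) (T : ℝ) :
    Integrable (Function.uncurry fun l x => (1 - l / T) * Real.cos (l * F x))
      ((volume.restrict (Set.uIoc 0 T)).prod μ) := by
  have hw : Integrable (fun z : ℝ × α => 1 - z.1 / T) ((volume.restrict (Set.uIoc 0 T)).prod μ) :=
    Integrable.comp_fst
      ((by fun_prop : Continuous fun l : ℝ => 1 - l / T).intervalIntegrable 0 T).def' μ
  refine hw.mul_bdd (c := 1) (by fun_prop) (ae_of_all _ fun z => ?_)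
  simpa using Real.abs_cos_le_one _

lemma integral_fejerKernel_comp (hF : Measurable F) (T : ℝ) :
    ∫ x, fejerKernel T (F x) ∂μ = ∫ l in (0 : ℝ)..T, ∫ x, (1 - l / T) * Real.cos (l * F x) ∂μ :=
  (intervalIntegral_integral_swap (integrable_one_sub_div_mul_cos hF T)).symm

lemma integrable_fejerKernel_comp (hF : Measurable F) {T : ℝ} (hT : 0 ≤ T) :
    Integrable (fun x => fejerKernel T (F x)) μ := by
  simpa [fejerKernel, Set.uIoc_of_le hT, intervalIntegral.integral_of_le hT] using
    (integrable_one_sub_div_mul_cos (μ := μ) hF T).integral_prod_right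

lemma intervalIntegrable_integral_one_sub_div_mul_cos (hF : Measurable F) (T : ℝ) :
    IntervalIntegrable (fun l => ∫ x, (1 - l / T) * Real.cos (l * F x) ∂μ) volume 0 T :=
  intervalIntegrable_iff.2 (integrable_one_sub_div_mul_cos hF T).integral_prod_left

theorem measure_abs_lt_le_of_abs_integral_cos_le (hF : Measurable F) {C τ : ℝ} (hτ : τ < 1)
    (hdecay : ∀ l > 0, |∫ x, Real.cos (l * F x) ∂μ| ≤ C * l ^ (-τ)) {ε : ℝ} (hε : 0 < ε) :
    μ {x | |F x| < ε} ≤ ENNReal.ofReal (4 * C / (1 - τ) * ε ^ τ) := by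
  set T := ε⁻¹
  have hT : 0 < T := inv_pos.2 hε
  set E := {x | |F x| < ε}
  have hE : MeasurableSet E := measurableSet_lt hF.abs measurable_const
  have hlower : T / 4 * μ.real E ≤ ∫ x, fejerKernel T (F x) ∂μ := by
    have hind : E.indicator (fun _ => T / 4) ≤ fun x => fejerKernel T (F x) := by
      intro x
      by_cases hx : x ∈ E
      · rw [Set.indicator_of_mem hx]
        refine quarter_le_fejerKernel hT ?_
        calc |F x| * T ≤ ε * T := by gcongr; exact le_of_lt hx
          _ = 1 := mul_inv_cancel₀ hε.ne'
      · rw [Set.indicator_of_notMem hx]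
        exact fejerKernel_nonneg hT _
    calc T / 4 * μ.real E = ∫ x, E.indicator (fun _ => T / 4) x ∂μ := by
          rw [integral_indicator_const _ hE, smul_eq_mul, mul_comm]
      _ ≤ _ := integral_mono ((integrable_const _).indicator hE)
          (integrable_fejerKernel_comp hF hT.le) hind
  have hupper : ∫ x, fejerKernel T (F x) ∂μ ≤ C * (T * ε ^ τ) / (1 - τ) := by
    rw [integral_fejerKernel_comp hF]
    calc _ ≤ ∫ l in (0 : ℝ)..T, C * l ^ (-τ) := by
          refine intervalIntegral.integral_mono_on_of_le_Ioo hT.le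
            (intervalIntegrable_integral_one_sub_div_mul_cos hF T)
            ((intervalIntegral.intervalIntegrable_rpow' (by linarith)).const_mul C) fun l hl => ?_
          have hw := one_sub_div_nonneg_of_mem_Icc (Set.Ioo_subset_Icc_self hl)
          have hw1 : 1 - l / T ≤ 1 := by linarith [div_pos hl.1 hT]
          have hI := hdecay l hl.1
          rw [integral_const_mul]
          calc (1 - l / T) * ∫ x, Real.cos (l * F x) ∂μ
              ≤ (1 - l / T) * (C * l ^ (-τ)) := by gcongr; exact (le_abs_self _).trans hI
            _ ≤ C * l ^ (-τ) := mul_le_of_le_one_left ((abs_nonneg _).trans hI) hw1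
      _ = C * (T * ε ^ τ) / (1 - τ) := by
          rw [intervalIntegral.integral_const_mul, integral_rpow (Or.inl (by linarith)),
            Real.zero_rpow (by linarith), sub_zero, neg_add_eq_sub, Real.rpow_sub hT,
            Real.rpow_one, Real.inv_rpow hε.le, div_inv_eq_mul]
          ring
  have hbound : μ.real E ≤ 4 * C / (1 - τ) * ε ^ τ := by
    refine le_of_mul_le_mul_left ?_ (by positivity : 0 < T / 4)
    calc T / 4 * μ.real E ≤ C * (T * ε ^ τ) / (1 - τ) := hlower.trans hupper
      _ = T / 4 * (4 * C / (1 - τ) * ε ^ τ) := by field_simp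
  rw [← ofReal_measureReal]
  exact ENNReal.ofReal_le_ofReal hbound

end

lemma abs_integral_cos_le_norm_integral_exp {α : Type*} [MeasurableSpace α] {μ : Measure α}
    [IsFiniteMeasure μ] {f : α → ℝ} (hf : Measurable f) :
    |∫ x, Real.cos (f x) ∂μ| ≤ ‖∫ x, Complex.exp (f x * Complex.I) ∂μ‖ := by
  have hint : Integrable (fun x => Complex.exp (f x * Complex.I)) μ :=
    (integrable_const (1 : ℝ)).mono' (by fun_prop)
      (ae_of_all _ fun x => (Complex.norm_exp_ofReal_mul_I (f x)).le)
  have hre : ∫ x, Real.cos (f x) ∂μ = (∫ x, Complex.exp (f x * Complex.I) ∂μ).re := by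
    simpa using integral_re hint
  exact hre ▸ Complex.abs_re_le_norm _

lemma exp_mul_prod_exp_neg_eq {ι : Type*} (s : Finset ι) (l a : ℝ) (b : ι → ℝ) :
    Complex.exp (Complex.I * l * a) * ∏ j ∈ s, Complex.exp (↑(-(l * b j)) * Complex.I)
      = Complex.exp (↑(l * (a - ∑ j ∈ s, b j)) * Complex.I) := by
  rw [← Complex.exp_sum, ← Complex.exp_add]
  push_cast
  rw [← Finset.sum_mul, Finset.sum_neg_distrib, ← Finset.mul_sum]
  ring_nf

lemma one_add_rpow_neg_le_rpow_neg {l γ τ : ℝ} (hl : 0 < l) (hτ : 0 ≤ τ) (hτγ : τ ≤ γ) :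
    (1 + l) ^ (-γ) ≤ l ^ (-τ) :=
  calc (1 + l) ^ (-γ) ≤ (1 + l) ^ (-τ) :=
        Real.rpow_le_rpow_of_exponent_le (by linarith) (neg_le_neg hτγ)
    _ ≤ l ^ (-τ) := Real.rpow_le_rpow_of_nonpos hl (by linarith) (neg_nonpos.2 hτ)

theorem stmt8_general {D d : ℕ} (J : Type*) [Fintype J]
    (B : Set (Fin D → ℝ)) (hBfin : volume B < ⊤)
    (ψ : (Fin D → ℝ) → ℝ) (φ : J → (Fin D → ℝ) → (Fin d → ℝ))
    (hψ : Measurable ψ) (hφ : ∀ j, Measurable (φ j))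
    (C₀ γ : ℝ) (hγ : 0 < γ)
    (hosc : ∀ lam : ℝ, ∀ f : J → (Fin d → ℝ) → ℂ,
      (∀ j, Measurable (f j)) → (∀ j y, ‖f j y‖ ≤ 1) →
      ‖∫ x in B, Complex.exp (Complex.I * (lam : ℂ) * ((ψ x : ℝ) : ℂ)) *
          ∏ j, f j (φ j x)‖ ≤ C₀ * (1 + |lam|) ^ (-γ)) :
    ∃ C τ : ℝ, 0 < τ ∧ ∀ g : J → (Fin d → ℝ) → ℝ, (∀ j, Measurable (g j)) →
      ∀ ε : ℝ, 0 < ε → ε ≤ 1 →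
      volume {x ∈ B | |ψ x - ∑ j, g j (φ j x)| < ε} ≤ ENNReal.ofReal (C * ε ^ τ) := by
  set τ := min γ (1 / 2)
  have hτ : 0 < τ := lt_min hγ one_half_pos
  have : IsFiniteMeasure (volume.restrict B) := isFiniteMeasure_restrict.2 hBfin.ne
  refine ⟨4 * C₀ / (1 - τ), τ, hτ, fun g hg ε hε _ => ?_⟩
  set F := fun x => ψ x - ∑ j, g j (φ j x)
  have hF : Measurable F := hψ.sub (Finset.measurable_sum _ fun j _ => (hg j).comp (hφ j))
  have hdecay : ∀ l > 0, |∫ x in B, Real.cos (l * F x)| ≤ C₀ * l ^ (-τ) := by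
    intro l hl
    have hosc_l := hosc l (fun j y => Complex.exp (↑(-(l * g j y)) * Complex.I))
      (fun j => by fun_prop) (fun j y => (Complex.norm_exp_ofReal_mul_I _).le)
    simp only [exp_mul_prod_exp_neg_eq] at hosc_l
    have hC₀ : 0 ≤ C₀ := nonneg_of_mul_nonneg_left ((norm_nonneg _).trans hosc_l) (by positivity)
    calc |∫ x in B, Real.cos (l * F x)| ≤ ‖∫ x in B, Complex.exp (↑(l * F x) * Complex.I)‖ :=
          abs_integral_cos_le_norm_integral_exp (by fun_prop)
      _ ≤ C₀ * (1 + |l|) ^ (-γ) := hosc_l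
      _ ≤ C₀ * l ^ (-τ) := by
          rw [abs_of_pos hl]
          exact mul_le_mul_of_nonneg_left
            (one_add_rpow_neg_le_rpow_neg hl hτ.le (min_le_left _ _)) hC₀
  have hE := measure_abs_lt_le_of_abs_integral_cos_le hF
    ((min_le_right _ _).trans_lt (by norm_num)) hdecay hε
  rwa [Measure.restrict_apply (measurableSet_lt hF.abs measurable_const), Set.inter_comm] at hE

theorem stmt8 {D d : ℕ} (J : Type*) [Fintype J]
    (B : Set (Fin D → ℝ)) (hB : MeasurableSet B) (hBfin : volume B < ⊤)
    (ψ : (Fin D → ℝ) → ℝ) (φ : J → (Fin D → ℝ) → (Fin d → ℝ))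
    (hψ : Measurable ψ) (hφ : ∀ j, Measurable (φ j))
    (C₀ γ : ℝ) (hγ : 0 < γ)
    (hosc : ∀ lam : ℝ, ∀ f : J → (Fin d → ℝ) → ℂ,
      (∀ j, Measurable (f j)) → (∀ j y, ‖f j y‖ ≤ 1) →
      ‖∫ x in B, Complex.exp (Complex.I * (lam : ℂ) * ((ψ x : ℝ) : ℂ)) *
          ∏ j, f j (φ j x)‖ ≤ C₀ * (1 + |lam|) ^ (-γ)) :
    ∃ C τ : ℝ, 0 < τ ∧ ∀ g : J → (Fin d → ℝ) → ℝ, (∀ j, Measurable (g j)) →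
      ∀ ε : ℝ, 0 < ε → ε ≤ 1 →
      volume {x ∈ B | |ψ x - ∑ j, g j (φ j x)| < ε} ≤ ENNReal.ofReal (C * ε ^ τ) :=
  stmt8_general J B hBfin ψ φ hψ hφ C₀ γ hγ hosc
end

section
/- Let $\Omega$ be a compact topological space, $K \subset \mathbb{R}$ a compact interval, and $F : V \times \Omega \to \mathbb{R}$, $V \supset K$ open, such that each $F_\omega = F(\cdot,\omega)$ is real analytic on $V$, each $(x,\omega) \mapsto \partial_x^k F(x,\omega)$ is continuous, and no $F_\omega$ vanishes identically on $K$. Then there exist $\tau > 0$ and $C < \infty$ such that for every $\varepsilon > 0$ and every $\omega \in \Omega$: $|\{x \in K : |F_\omega(x)| < \varepsilon\}| \le C \varepsilon^{\tau}$. -/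
open MeasureTheory Set

private lemma mvt_eq' {g g' : ℝ → ℝ} {x y : ℝ} (hxy : x < y)
    (hd : ∀ z ∈ Icc x y, HasDerivAt g (g' z) z) :
    ∃ c ∈ Ioo x y, g y - g x = g' c * (y - x) := by
  have hc : ContinuousOn g (Icc x y) := fun z hz =>
    ((hd z hz).continuousAt).continuousWithinAt
  obtain ⟨c, hc1, hc2⟩ := exists_hasDerivAt_eq_slope g g' hxy hc
    (fun z hz => hd z (Ioo_subset_Icc_self hz))
  refine ⟨c, hc1, ?_⟩
  rw [hc2, div_mul_cancel₀]
  exact sub_ne_zero.2 hxy.ne'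

private lemma mvt_abs' {g g' : ℝ → ℝ} {u v γ : ℝ}
    (hd : ∀ x ∈ Icc u v, HasDerivAt g (g' x) x)
    (hγ : ∀ x ∈ Icc u v, γ ≤ |g' x|)
    {x y : ℝ} (hx : x ∈ Icc u v) (hy : y ∈ Icc u v) :
    γ * |y - x| ≤ |g y - g x| := by
  rcases lt_trichotomy x y with h | h | h
  · have hsub : Icc x y ⊆ Icc u v := Icc_subset_Icc hx.1 hy.2
    obtain ⟨c, hc1, hc2⟩ := mvt_eq' h (fun z hz => hd z (hsub hz))
    rw [hc2, abs_mul]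
    have e2 : |y - x| = y - x := abs_of_pos (sub_pos.2 h)
    rw [e2]
    exact mul_le_mul_of_nonneg_right (hγ c (hsub (Ioo_subset_Icc_self hc1))) (by linarith)
  · simp [h]
  · have hsub : Icc y x ⊆ Icc u v := Icc_subset_Icc hy.1 hx.2
    obtain ⟨c, hc1, hc2⟩ := mvt_eq' h (fun z hz => hd z (hsub hz))
    have e : g y - g x = -(g x - g y) := by ring
    rw [e, abs_neg, hc2, abs_mul, abs_of_pos (sub_pos.2 h)]
    have e2 : |y - x| = x - y := by rw [abs_sub_comm, abs_of_pos (sub_pos.2 h)]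
    rw [e2]
    exact mul_le_mul_of_nonneg_right (hγ c (hsub (Ioo_subset_Icc_self hc1))) (by linarith)

private lemma sublevel' (d : ℕ → ℝ → ℝ) (k : ℕ) :
    ∀ u v γ ε : ℝ, u ≤ v → 0 < γ → 0 < ε →
    (∀ j, ∀ x ∈ Icc u v, HasDerivAt (d j) (d (j+1) x) x) →
    (∀ x ∈ Icc u v, γ ≤ |d k x|) →
    volume {x ∈ Icc u v | |d 0 x| < ε} ≤
      ENNReal.ofReal ((5 * 2^k - 4) * (1 + (v - u)) * (ε/γ) ^ ((2:ℝ)⁻¹ ^ k)) := by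
  induction k with
  | zero =>
    intro u v γ ε huv hγ hε hder hlow
    simp only [pow_zero, Real.rpow_one]
    rcases le_or_gt ε γ with h | h
    · have hemp : {x ∈ Icc u v | |d 0 x| < ε} ⊆ ∅ := by
        rintro x ⟨hx1, hx2⟩
        exact absurd hx2 (not_lt.2 (h.trans (hlow x hx1)))
      exact le_trans (measure_mono hemp) (by simp)
    · calc volume {x ∈ Icc u v | |d 0 x| < ε} ≤ volume (Icc u v) :=
          measure_mono (sep_subset _ _)
        _ = ENNReal.ofReal (v - u) := Real.volume_Icc
        _ ≤ _ := by
          apply ENNReal.ofReal_le_ofReal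
          have h1 : (1:ℝ) ≤ ε / γ := le_of_lt ((one_lt_div hγ).2 h)
          have hL : (0:ℝ) ≤ v - u := sub_nonneg.2 huv
          nlinarith
  | succ k ih =>
    intro u v γ ε huv hγ hε hder hlow
    have hτpos : (0:ℝ) < (2:ℝ)⁻¹ ^ k := pow_pos (by norm_num) k
    have hτle : ((2:ℝ)⁻¹) ^ k ≤ 1 := pow_le_one₀ (by norm_num) (by norm_num)
    have h2k : (1:ℝ) ≤ 2^k := one_le_pow₀ (by norm_num)
    have hCk : (1:ℝ) ≤ 5 * 2^k - 4 := by nlinarith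
    have hL : (0:ℝ) ≤ v - u := sub_nonneg.2 huv
    have hwpos : (0:ℝ) < (2:ℝ)⁻¹ ^ (k+1) := pow_pos (by norm_num) _
    rcases lt_or_ge γ ε with h | h
    · have h1 : (1:ℝ) ≤ (ε/γ) ^ ((2:ℝ)⁻¹ ^ (k+1)) :=
        Real.one_le_rpow (le_of_lt ((one_lt_div hγ).2 h)) (le_of_lt hwpos)
      have h2k1 : (1:ℝ) ≤ 2^(k+1) := one_le_pow₀ (by norm_num)
      calc volume {x ∈ Icc u v | |d 0 x| < ε} ≤ volume (Icc u v) :=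
          measure_mono (sep_subset _ _)
        _ = ENNReal.ofReal (v - u) := Real.volume_Icc
        _ ≤ _ := by
          apply ENNReal.ofReal_le_ofReal
          have hC1 : (1:ℝ) ≤ 5 * 2^(k+1) - 4 := by nlinarith
          have key : (1:ℝ)*(1+(v-u))*1 ≤
              (5 * 2^(k+1) - 4) * (1 + (v - u)) * (ε/γ) ^ ((2:ℝ)⁻¹ ^ (k+1)) := by
            apply mul_le_mul (mul_le_mul hC1 le_rfl (by linarith) (by linarith)) h1
              (by norm_num) (by positivity)
          linarith
    · set s : ℝ := ε / γ with hs
      have hs0 : 0 < s := div_pos hε hγ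
      have hs1 : s ≤ 1 := (div_le_one hγ).2 h
      set t : ℝ := s ^ ((2:ℝ)⁻¹ ^ (k+1)) with ht
      have ht0 : 0 < t := Real.rpow_pos_of_pos hs0 _
      set δ : ℝ := γ * t with hδ
      have hδ0 : 0 < δ := mul_pos hγ ht0
      have hkey : (ε / δ) ^ ((2:ℝ)⁻¹ ^ k) ≤ t := by
        have e1 : ε / δ = s ^ (1 - (2:ℝ)⁻¹^(k+1)) := by
          rw [Real.rpow_sub hs0, Real.rpow_one, hδ, hs, ← ht]
          field_simp
        rw [e1, ← Real.rpow_mul hs0.le]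
        apply Real.rpow_le_rpow_of_exponent_ge hs0 hs1
        have hpow : (2:ℝ)⁻¹ ^ (k+1) = (2:ℝ)⁻¹ ^ k * 2⁻¹ := pow_succ _ _
        have hw2 : (2:ℝ)⁻¹ ^ (k+1) ≤ 2⁻¹ := by
          rw [hpow]; nlinarith
        nlinarith [hwpos, hτpos]
      -- side interval helper
      have hside : ∀ u' v', u ≤ u' → v' ≤ v → (∀ x ∈ Icc u' v', δ ≤ |d k x|) →
          volume {x ∈ Icc u' v' | |d 0 x| < ε} ≤
            ENNReal.ofReal ((5 * 2^k - 4) * (1 + (v - u)) * t) := by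
        intro u' v' hu hv hlow'
        rcases le_or_gt u' v' with huv' | huv'
        · refine (ih u' v' δ ε huv' hδ0 hε
            (fun j x hx => hder j x (Icc_subset_Icc hu hv hx)) hlow').trans ?_
          apply ENNReal.ofReal_le_ofReal
          have h1L : (1:ℝ) + (v' - u') ≤ 1 + (v - u) := by linarith
          have h0 : (0:ℝ) ≤ (ε/δ) ^ ((2:ℝ)⁻¹ ^ k) := by positivity
          have h1L0 : (0:ℝ) ≤ 1 + (v' - u') := by linarith
          calc (5 * 2^k - 4) * (1 + (v' - u')) * (ε/δ) ^ ((2:ℝ)⁻¹ ^ k)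
              ≤ (5 * 2^k - 4) * (1 + (v - u)) * (ε/δ) ^ ((2:ℝ)⁻¹ ^ k) := by
                apply mul_le_mul_of_nonneg_right _ h0
                apply mul_le_mul_of_nonneg_left h1L (by linarith)
            _ ≤ (5 * 2^k - 4) * (1 + (v - u)) * t := by
                apply mul_le_mul_of_nonneg_left hkey (by nlinarith)
        · have : Icc u' v' = ∅ := Icc_eq_empty (not_le.2 huv')
          rw [this]
          simp
      by_cases hS : ∃ s₀ ∈ Icc u v, |d k s₀| < δ
      · obtain ⟨s₀, hs₀I, hs₀S⟩ := hS
        set p : ℝ := s₀ - 2 * δ / γ with hp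
        set q : ℝ := s₀ + 2 * δ / γ with hq
        have hdγ : (0:ℝ) < 2 * δ / γ := by positivity
        have hdiam : ∀ x ∈ Icc u v, |d k x| < δ → |x - s₀| < 2 * δ / γ := by
          intro x hxI hxS
          have := mvt_abs' (g := d k) (g' := d (k+1)) (hder k) hlow hs₀I hxI
          have habs : |d k x - d k s₀| ≤ |d k x| + |d k s₀| := abs_sub _ _
          have : γ * |x - s₀| < 2 * δ := by
            calc γ * |x - s₀| ≤ |d k x - d k s₀| := this
              _ ≤ |d k x| + |d k s₀| := habs
              _ < δ + δ := by linarith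
              _ = 2 * δ := by ring
          rw [lt_div_iff₀ hγ]
          linarith [this]
        have hpv : p ≤ v := by
          have := hs₀I.2
          rw [hp]; linarith
        have hqu : u ≤ q := by
          have := hs₀I.1
          rw [hq]; linarith
        have hlowL : ∀ x ∈ Icc u p, δ ≤ |d k x| := by
          intro x hx
          by_contra hcon
          push_neg at hcon
          have h1 := hdiam x ⟨hx.1, hx.2.trans hpv⟩ hcon
          have h2 : x ≤ p := hx.2
          rw [hp] at h2
          have := le_abs_self (s₀ - x)
          rw [abs_sub_comm] at h1
          linarith
        have hlowR : ∀ x ∈ Icc q v, δ ≤ |d k x| := by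
          intro x hx
          by_contra hcon
          push_neg at hcon
          have h1 := hdiam x ⟨hqu.trans hx.1, hx.2⟩ hcon
          have h2 : q ≤ x := hx.1
          rw [hq] at h2
          have := le_abs_self (x - s₀)
          linarith
        have hcover : {x ∈ Icc u v | |d 0 x| < ε} ⊆
            ({x ∈ Icc u p | |d 0 x| < ε} ∪ Ioo p q) ∪ {x ∈ Icc q v | |d 0 x| < ε} := by
          rintro x ⟨hxI, hxε⟩
          rcases le_or_gt x p with hxp | hxp
          · exact Or.inl (Or.inl ⟨⟨hxI.1, hxp⟩, hxε⟩)
          rcases lt_or_ge x q with hxq | hxq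
          · exact Or.inl (Or.inr ⟨hxp, hxq⟩)
          · exact Or.inr ⟨⟨hxq, hxI.2⟩, hxε⟩
        have hmid : volume (Ioo p q) = ENNReal.ofReal (4 * t) := by
          rw [Real.volume_Ioo]
          congr 1
          rw [hp, hq, hδ]
          field_simp
          ring
        have hBL := hside u p le_rfl hpv hlowL
        have hBR := hside q v hqu le_rfl hlowR
        calc volume {x ∈ Icc u v | |d 0 x| < ε}
            ≤ volume (({x ∈ Icc u p | |d 0 x| < ε} ∪ Ioo p q) ∪
                {x ∈ Icc q v | |d 0 x| < ε}) := measure_mono hcover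
          _ ≤ volume ({x ∈ Icc u p | |d 0 x| < ε} ∪ Ioo p q) +
              volume {x ∈ Icc q v | |d 0 x| < ε} := measure_union_le _ _
          _ ≤ (volume {x ∈ Icc u p | |d 0 x| < ε} + volume (Ioo p q)) +
              volume {x ∈ Icc q v | |d 0 x| < ε} := by
              exact add_le_add (measure_union_le _ _) le_rfl
          _ ≤ (ENNReal.ofReal ((5 * 2^k - 4) * (1 + (v - u)) * t) +
                ENNReal.ofReal (4 * t)) +
              ENNReal.ofReal ((5 * 2^k - 4) * (1 + (v - u)) * t) := by
              exact add_le_add (add_le_add hBL (le_of_eq hmid)) hBR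
          _ ≤ _ := by
              have hB0 : (0:ℝ) ≤ (5 * 2^k - 4) * (1 + (v - u)) * t :=
                mul_nonneg (mul_nonneg (by linarith) (by linarith)) ht0.le
              have h4t : (0:ℝ) ≤ 4 * t := by positivity
              rw [← ENNReal.ofReal_add hB0 h4t, ← ENNReal.ofReal_add (by linarith) hB0]
              apply ENNReal.ofReal_le_ofReal
              have hpow : (2:ℝ) ^ (k+1) = 2 ^ k * 2 := pow_succ _ _
              nlinarith [mul_nonneg hL ht0.le, ht0.le, hL]
      · push_neg at hS
        refine (hside u v le_rfl le_rfl hS).trans ?_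
        apply ENNReal.ofReal_le_ofReal
        have hpow : (2:ℝ) ^ (k+1) = 2 ^ k * 2 := pow_succ _ _
        have h5 : (0:ℝ) ≤ 5 * 2^k * ((1 + (v-u)) * t) :=
          mul_nonneg (by positivity) (mul_nonneg (by linarith) ht0.le)
        nlinarith [h5]

set_option maxHeartbeats 2000000 in
theorem stmt10 {Ω : Type*} [TopologicalSpace Ω] [CompactSpace Ω]
    (a b : ℝ) (hab : a < b) (V : Set ℝ) (hV : IsOpen V) (hKV : Set.Icc a b ⊆ V)
    (F : ℝ → Ω → ℝ)
    (han : ∀ ω : Ω, AnalyticOn ℝ (fun x => F x ω) V)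
    (hcont : ∀ k : ℕ, Continuous fun p : ℝ × Ω => iteratedDeriv k (fun x => F x p.2) p.1)
    (hnv : ∀ ω : Ω, ∃ x ∈ Set.Icc a b, F x ω ≠ 0) :
    ∃ τ C : ℝ, 0 < τ ∧ 0 < C ∧ ∀ ε : ℝ, 0 < ε → ∀ ω : Ω,
      volume {x ∈ Set.Icc a b | |F x ω| < ε} ≤ ENNReal.ofReal (C * ε ^ τ) := by
  have hanω : ∀ ω : Ω, AnalyticOnNhd ℝ (fun y => F y ω) V := fun ω =>
    (hV.analyticOn_iff_analyticOnNhd).mp (han ω)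
  -- derivative chain
  have hchain : ∀ (ω : Ω) (j : ℕ), ∀ x ∈ V,
      HasDerivAt (iteratedDeriv j (fun y => F y ω))
        (iteratedDeriv (j+1) (fun y => F y ω) x) x := by
    intro ω j x hx
    have h1 : AnalyticOnNhd ℝ (deriv^[j] (fun y => F y ω)) V := (hanω ω).iterated_deriv j
    have h2 := ((h1 x hx).differentiableAt).hasDerivAt
    rw [iteratedDeriv_eq_iterate, iteratedDeriv_eq_iterate, Function.iterate_succ_apply']
    exact h2
  -- thickening
  obtain ⟨δ₀, hδ₀, hth⟩ := isCompact_Icc.exists_thickening_subset_open hV hKV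
  have hW : Ioo (a - δ₀) (b + δ₀) ⊆ V := by
    intro y hy
    apply hth
    rw [Metric.mem_thickening_iff]
    refine ⟨max a (min y b), ⟨le_max_left _ _, max_le hab.le (min_le_right _ _)⟩, ?_⟩
    rw [Real.dist_eq, abs_lt]
    rcases lt_or_ge y a with h1 | h1
    · have : min y b = y := min_eq_left (by linarith)
      rw [this, max_eq_left (by linarith)]
      constructor <;> [linarith [hy.1]; linarith]
    · rcases le_or_gt y b with h2 | h2
      · have : min y b = y := min_eq_left h2
        rw [this, max_eq_right h1]
        constructor <;> linarith
      · have : min y b = b := min_eq_right h2.le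
        rw [this, max_eq_right hab.le]
        constructor <;> [linarith; linarith [hy.2]]
  -- nonvanishing of some derivative
  have hne : ∀ (x : ℝ) (ω : Ω), x ∈ Icc a b →
      ∃ k, iteratedDeriv k (fun y => F y ω) x ≠ 0 := by
    intro x ω hx
    by_contra hcon
    push_neg at hcon
    have hxV : x ∈ V := hKV hx
    obtain ⟨p, hp⟩ := hanω ω x hxV
    obtain ⟨r, hr⟩ := hp
    have hev : (fun y => F y ω) =ᶠ[nhds x] 0 := by
      have hrpos := hr.r_pos
      filter_upwards [EMetric.ball_mem_nhds x hrpos] with z hz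
      have hz' : z - x ∈ Metric.eball (0:ℝ) r := by
        simpa [Metric.mem_eball, edist_dist, dist_eq_norm] using hz
      have hsum := hr.hasSum_iteratedFDeriv hz'
      have hzero : ∀ n : ℕ, (((n.factorial : ℝ))⁻¹ •
          (iteratedFDeriv ℝ n (fun y => F y ω) x) fun _ => z - x) = 0 := by
        intro n
        rw [iteratedFDeriv_apply_eq_iteratedDeriv_mul_prod, hcon n]
        simp
      have h0 : HasSum (fun n : ℕ => (((n.factorial : ℝ))⁻¹ •
          (iteratedFDeriv ℝ n (fun y => F y ω) x) fun _ => z - x)) 0 := by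
        rw [funext hzero]
        exact hasSum_zero
      have := hsum.unique h0
      simpa using this
    have heq := ((hanω ω).mono hW).eqOn_zero_of_preconnected_of_eventuallyEq_zero
      isPreconnected_Ioo (show x ∈ Ioo (a - δ₀) (b + δ₀) by
        constructor <;> [linarith [hx.1]; linarith [hx.2]]) hev
    obtain ⟨y, hy, hFy⟩ := hnv ω
    exact hFy (heq ⟨by linarith [hy.1], by linarith [hy.2]⟩)
  -- compactness: uniform n and c
  have hcomp : IsCompact ((Icc a b) ×ˢ (univ : Set Ω)) := isCompact_Icc.prod isCompact_univ
  set U : ℕ → Set (ℝ × Ω) := fun m =>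
    ⋃ k, ⋃ (_ : k ≤ m),
      {p : ℝ × Ω | 1/((m:ℝ)+1) < |iteratedDeriv k (fun y => F y p.2) p.1|} with hU
  have hUopen : ∀ m, IsOpen (U m) := fun m =>
    isOpen_iUnion fun k => isOpen_iUnion fun _ =>
      isOpen_lt continuous_const (hcont k).abs
  have hUmono : ∀ i j : ℕ, i ≤ j → U i ⊆ U j := by
    intro i j hij p hp
    rw [hU] at hp ⊢
    obtain ⟨k, hk, hpk⟩ := mem_iUnion₂.1 hp
    refine mem_iUnion₂.2 ⟨k, hk.trans hij, ?_⟩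
    have hcast : (i:ℝ) ≤ (j:ℝ) := Nat.cast_le.2 hij
    have : 1/((j:ℝ)+1) ≤ 1/((i:ℝ)+1) :=
      one_div_le_one_div_of_le (by positivity) (by linarith)
    exact lt_of_le_of_lt this hpk
  have hUcov : (Icc a b) ×ˢ (univ : Set Ω) ⊆ ⋃ m, U m := by
    rintro ⟨x, ω⟩ ⟨hx, -⟩
    obtain ⟨k, hk⟩ := hne x ω hx
    obtain ⟨m0, hm0⟩ := exists_nat_one_div_lt (abs_pos.2 hk)
    refine mem_iUnion.2 ⟨max k m0, ?_⟩
    refine mem_iUnion₂.2 ⟨k, le_max_left _ _, ?_⟩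
    refine lt_of_le_of_lt ?_ hm0
    apply one_div_le_one_div_of_le (by positivity)
    have : (m0 : ℝ) ≤ (max k m0 : ℕ) := by exact_mod_cast le_max_right k m0
    linarith
  obtain ⟨T, hT⟩ := hcomp.elim_finite_subcover U hUopen hUcov
  set n : ℕ := T.sup id with hn
  set c : ℝ := 1/((n:ℝ)+1) with hc
  have hc0 : 0 < c := by rw [hc]; positivity
  have hlow : ∀ (ω : Ω), ∀ x ∈ Icc a b, ∃ k ≤ n, c ≤ |iteratedDeriv k (fun y => F y ω) x| := by
    intro ω x hx
    have hp : (x, ω) ∈ ⋃ i ∈ T, U i := hT ⟨hx, mem_univ _⟩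
    obtain ⟨i, hi, hpi⟩ := mem_iUnion₂.1 hp
    have : (x, ω) ∈ U n := hUmono i n (Finset.le_sup (f := id) hi) hpi
    rw [hU] at this
    obtain ⟨k, hk, hpk⟩ := mem_iUnion₂.1 this
    exact ⟨k, hk, le_of_lt hpk⟩
  clear_value n c
  -- uniform bound on derivatives up to order n+1 on a neighborhood
  set K' : Set ℝ := Icc (a - δ₀/2) (b + δ₀/2) with hK'
  have hK'V : K' ⊆ V := by
    intro x hx
    apply hW
    constructor <;> [linarith [hx.1]; linarith [hx.2]]
  have hK'c : IsCompact K' := by rw [hK']; exact isCompact_Icc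
  clear_value K'
  have hMex : ∀ k : ℕ, ∃ Mk : ℝ, ∀ x ∈ K', ∀ ω : Ω,
      |iteratedDeriv k (fun y => F y ω) x| ≤ Mk := by
    intro k
    obtain ⟨Mk, hMk⟩ := (hK'c.prod isCompact_univ).exists_bound_of_continuousOn
      ((hcont k).continuousOn)
    exact ⟨Mk, fun x hx ω => by
      simpa [Real.norm_eq_abs] using hMk (x, ω) ⟨hx, mem_univ _⟩⟩
  choose Mf hMf using hMex
  set M : ℝ := 1 + ∑ k ∈ Finset.range (n+2), |Mf k| with hM
  have hM1 : (1:ℝ) ≤ M := by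
    rw [hM]
    have : (0:ℝ) ≤ ∑ k ∈ Finset.range (n+2), |Mf k| :=
      Finset.sum_nonneg fun i _ => abs_nonneg _
    linarith
  have hM0 : (0:ℝ) < M := by linarith
  have hMle : ∀ k ≤ n+1, ∀ x ∈ K', ∀ ω : Ω,
      |iteratedDeriv k (fun y => F y ω) x| ≤ M := by
    intro k hk x hx ω
    have h1 := hMf k x hx ω
    have h2 : |Mf k| ≤ ∑ i ∈ Finset.range (n+2), |Mf i| :=
      Finset.single_le_sum (fun i _ => abs_nonneg (Mf i)) (Finset.mem_range.2 (by omega))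
    have h3 : Mf k ≤ |Mf k| := le_abs_self _
    rw [hM]
    linarith
  clear_value M
  -- radius
  set r : ℝ := min (δ₀/2) (c/(2*M)) with hr
  have hr0 : 0 < r := by rw [hr]; exact lt_min (by linarith) (by positivity)
  have hrδ : r ≤ δ₀/2 := by rw [hr]; exact min_le_left _ _
  have hrM : M * r ≤ c/2 := by
    have h1 : r ≤ c/(2*M) := by rw [hr]; exact min_le_right _ _
    calc M * r ≤ M * (c/(2*M)) := mul_le_mul_of_nonneg_left h1 hM0.le
      _ = c/2 := by field_simp
  clear_value r
  -- local lower bound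
  have hloc : ∀ (ω : Ω), ∀ x₀ ∈ Icc a b, ∃ k ≤ n,
      ∀ x ∈ Icc (x₀ - r) (x₀ + r), c/2 ≤ |iteratedDeriv k (fun y => F y ω) x| := by
    intro ω x₀ hx₀
    obtain ⟨k, hk, hck⟩ := hlow ω x₀ hx₀
    refine ⟨k, hk, ?_⟩
    intro x hx
    have hsubK' : Icc (x₀ - r) (x₀ + r) ⊆ K' := by
      intro z hz
      have h1 := hz.1; have h2 := hz.2
      have h3 := hx₀.1; have h4 := hx₀.2
      rw [hK', mem_Icc]
      constructor <;> linarith [hrδ]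
    have hder : ∀ z ∈ Icc (x₀ - r) (x₀ + r),
        HasDerivAt (iteratedDeriv k (fun y => F y ω))
          (iteratedDeriv (k+1) (fun y => F y ω) z) z :=
      fun z hz => hchain ω k z (hK'V (hsubK' hz))
    have hx₀mem : x₀ ∈ Icc (x₀ - r) (x₀ + r) := by
      constructor <;> linarith [hr0.le]
    have hdiff : |iteratedDeriv k (fun y => F y ω) x -
        iteratedDeriv k (fun y => F y ω) x₀| ≤ c/2 := by
      rcases lt_trichotomy x x₀ with h | h | h
      · obtain ⟨z, hz, hzeq⟩ := mvt_eq' h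
          (fun w hw => hder w (Icc_subset_Icc hx.1 hx₀mem.2 hw))
        have habs : |iteratedDeriv k (fun y => F y ω) x₀ -
            iteratedDeriv k (fun y => F y ω) x| ≤ M * (x₀ - x) := by
          rw [hzeq, abs_mul, abs_of_pos (sub_pos.2 h)]
          apply mul_le_mul_of_nonneg_right _ (by linarith)
          exact hMle (k+1) (by omega) z (hsubK' (Icc_subset_Icc hx.1 hx₀mem.2
            (Ioo_subset_Icc_self hz))) ω
        rw [abs_sub_comm]
        have hxx : x₀ - x ≤ r := by have := hx.1; linarith
        calc |iteratedDeriv k (fun y => F y ω) x₀ -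
            iteratedDeriv k (fun y => F y ω) x| ≤ M * (x₀ - x) := habs
          _ ≤ M * r := mul_le_mul_of_nonneg_left hxx hM0.le
          _ ≤ c/2 := hrM
      · rw [h]; simp; linarith [hc0]
      · obtain ⟨z, hz, hzeq⟩ := mvt_eq' h
          (fun w hw => hder w (Icc_subset_Icc hx₀mem.1 hx.2 hw))
        have habs : |iteratedDeriv k (fun y => F y ω) x -
            iteratedDeriv k (fun y => F y ω) x₀| ≤ M * (x - x₀) := by
          rw [hzeq, abs_mul, abs_of_pos (sub_pos.2 h)]
          apply mul_le_mul_of_nonneg_right _ (by linarith)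
          exact hMle (k+1) (by omega) z (hsubK' (Icc_subset_Icc hx₀mem.1 hx.2
            (Ioo_subset_Icc_self hz))) ω
        have hxx : x - x₀ ≤ r := by have := hx.2; linarith
        calc |iteratedDeriv k (fun y => F y ω) x -
            iteratedDeriv k (fun y => F y ω) x₀| ≤ M * (x - x₀) := habs
          _ ≤ M * r := mul_le_mul_of_nonneg_left hxx hM0.le
          _ ≤ c/2 := hrM
    have := abs_sub_abs_le_abs_sub (iteratedDeriv k (fun y => F y ω) x₀)
      (iteratedDeriv k (fun y => F y ω) x)
    rw [abs_sub_comm] at hdiff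
    linarith
  -- covering of [a,b]
  set N : ℕ := ⌈(b - a)/r⌉₊ with hN
  set xc : ℕ → ℝ := fun i => min (a + i * r) b with hxc
  have hxcK : ∀ i, xc i ∈ Icc a b := by
    intro i
    constructor
    · apply le_min _ hab.le
      have : (0:ℝ) ≤ i * r := by positivity
      linarith
    · exact min_le_right _ _
  have hcov : Icc a b ⊆ ⋃ i ∈ Finset.range (N+1), Icc (xc i - r) (xc i + r) := by
    intro x hx
    set i : ℕ := ⌊(x - a)/r⌋₊ with hi
    have hxa : (0:ℝ) ≤ (x - a)/r := div_nonneg (by linarith [hx.1]) hr0.le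
    have hiN : i ≤ N := by
      rw [hi, hN]
      refine le_trans (Nat.floor_mono ?_) (Nat.floor_le_ceil _)
      gcongr
      linarith [hx.2]
    have h1 : (i:ℝ) * r ≤ x - a := by
      have := Nat.floor_le hxa
      rw [← hi] at this
      calc (i:ℝ) * r ≤ ((x-a)/r) * r := mul_le_mul_of_nonneg_right this hr0.le
        _ = x - a := by field_simp
    have h2 : x - a < ((i:ℝ) + 1) * r := by
      have := Nat.lt_floor_add_one ((x - a)/r)
      rw [← hi] at this
      calc x - a = ((x-a)/r) * r := by field_simp
        _ < ((i:ℝ) + 1) * r := mul_lt_mul_of_pos_right this hr0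
    have hxceq : xc i = a + i * r := by
      rw [hxc]
      exact min_eq_left (by linarith [hx.2])
    refine mem_iUnion₂.2 ⟨i, Finset.mem_range.2 (by omega), ?_⟩
    rw [hxceq]
    constructor <;> [linarith; linarith]
  clear_value N xc
  -- final assembly
  set τ : ℝ := (2:ℝ)⁻¹ ^ n with hτ
  have hτ0 : 0 < τ := by rw [hτ]; positivity
  have h2n : (1:ℝ) ≤ 2^n := one_le_pow₀ (by norm_num)
  have h5n : (0:ℝ) ≤ 5 * 2^n - 4 := by nlinarith
  have hpowc : (0:ℝ) ≤ (2/c) ^ τ := Real.rpow_nonneg (by positivity) _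
  set C0 : ℝ := ((N:ℝ)+1) * (5 * 2^n - 4) * (1 + 2*r) * ((2/c) ^ τ) with hC0
  have hC00 : 0 ≤ C0 := by
    rw [hC0]
    apply mul_nonneg _ hpowc
    apply mul_nonneg (mul_nonneg (by positivity) h5n) (by linarith [hr0])
  set C : ℝ := C0 + (b-a) * ((2/c) ^ τ) + 1 with hC
  have hCpos : 0 < C := by
    have : (0:ℝ) ≤ (b-a) * ((2/c) ^ τ) := mul_nonneg (by linarith) hpowc
    rw [hC]; linarith
  clear_value τ C0 C
  refine ⟨τ, C, hτ0, hCpos, ?_⟩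
  intro ε hε ω
  set d : ℕ → ℝ → ℝ := fun j => iteratedDeriv j (fun y => F y ω) with hdd
  have hd0 : ∀ x, d 0 x = F x ω := fun x => by simp [hdd]
  have hεντ : (0:ℝ) ≤ ε ^ τ := Real.rpow_nonneg hε.le _
  rcases le_or_gt ε (c/2) with hcase | hcase
  · -- small ε: use the covering
    have hEsub : {x ∈ Icc a b | |F x ω| < ε} ⊆
        ⋃ i ∈ Finset.range (N+1), {x ∈ Icc (xc i - r) (xc i + r) | |d 0 x| < ε} := by
      rintro x ⟨hx1, hx2⟩
      obtain ⟨i, hi, hxi⟩ := mem_iUnion₂.1 (hcov hx1)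
      exact mem_iUnion₂.2 ⟨i, hi, ⟨hxi, by rw [hd0]; exact hx2⟩⟩
    set B : ℝ := (5 * 2^n - 4) * (1 + 2*r) * ((ε/(c/2)) ^ τ) with hB
    have hs2 : (0:ℝ) < ε/(c/2) := by positivity
    have hs21 : ε/(c/2) ≤ 1 := (div_le_one (by positivity)).2 hcase
    have hbound : ∀ i ∈ Finset.range (N+1),
        volume {x ∈ Icc (xc i - r) (xc i + r) | |d 0 x| < ε} ≤ ENNReal.ofReal B := by
      intro i _
      obtain ⟨k, hk, hlock⟩ := hloc ω (xc i) (hxcK i)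
      have hsub : Icc (xc i - r) (xc i + r) ⊆ K' := by
        intro z hz
        have h1 := hz.1; have h2 := hz.2
        have h3 := (hxcK i).1; have h4 := (hxcK i).2
        rw [hK', mem_Icc]
        constructor <;> linarith [hrδ]
      have hchain' : ∀ j, ∀ x ∈ Icc (xc i - r) (xc i + r),
          HasDerivAt (d j) (d (j+1) x) x :=
        fun j x hx => hchain ω j x (hK'V (hsub hx))
      refine (sublevel' d k (xc i - r) (xc i + r) (c/2) ε (by linarith [hr0])
        (by positivity) hε hchain' (by simpa [hdd] using hlock)).trans ?_
      apply ENNReal.ofReal_le_ofReal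
      have hlen : xc i + r - (xc i - r) = 2*r := by ring
      rw [hlen, hB]
      have h2k : (1:ℝ) ≤ 2^k := one_le_pow₀ (by norm_num)
      have hm1 : (5:ℝ) * 2^k - 4 ≤ 5 * 2^n - 4 := by
        have : (2:ℝ)^k ≤ 2^n := pow_le_pow_right₀ (by norm_num) hk
        linarith
      have hm2 : (ε/(c/2)) ^ ((2:ℝ)⁻¹ ^ k) ≤ (ε/(c/2)) ^ τ := by
        apply Real.rpow_le_rpow_of_exponent_ge hs2 hs21
        rw [hτ]
        exact pow_le_pow_of_le_one (by norm_num) (by norm_num) hk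
      have hr2 : (0:ℝ) ≤ 1 + 2*r := by linarith [hr0]
      have he0 : (0:ℝ) ≤ (ε/(c/2)) ^ ((2:ℝ)⁻¹ ^ k) := Real.rpow_nonneg hs2.le _
      calc (5 * 2^k - 4) * (1 + 2*r) * (ε/(c/2)) ^ ((2:ℝ)⁻¹ ^ k)
          ≤ (5 * 2^n - 4) * (1 + 2*r) * (ε/(c/2)) ^ ((2:ℝ)⁻¹ ^ k) := by
            apply mul_le_mul_of_nonneg_right _ he0
            exact mul_le_mul_of_nonneg_right hm1 hr2
        _ ≤ (5 * 2^n - 4) * (1 + 2*r) * (ε/(c/2)) ^ τ := by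
            apply mul_le_mul_of_nonneg_left hm2 (mul_nonneg h5n hr2)
    have hB0 : 0 ≤ B := by
      rw [hB]
      apply mul_nonneg (mul_nonneg h5n (by linarith [hr0]))
      exact Real.rpow_nonneg hs2.le _
    clear_value B
    calc volume {x ∈ Icc a b | |F x ω| < ε}
        ≤ volume (⋃ i ∈ Finset.range (N+1),
            {x ∈ Icc (xc i - r) (xc i + r) | |d 0 x| < ε}) := measure_mono hEsub
      _ ≤ ∑ i ∈ Finset.range (N+1),
            volume {x ∈ Icc (xc i - r) (xc i + r) | |d 0 x| < ε} :=
          measure_biUnion_finset_le _ _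
      _ ≤ ∑ _i ∈ Finset.range (N+1), ENNReal.ofReal B :=
          Finset.sum_le_sum hbound
      _ = ((N:ℕ)+1 : ℕ) * ENNReal.ofReal B := by
          rw [Finset.sum_const, Finset.card_range, nsmul_eq_mul]
      _ = ENNReal.ofReal (((N:ℝ)+1) * B) := by
          rw [ENNReal.ofReal_mul (by positivity)]
          congr 1
          rw [← ENNReal.ofReal_natCast]
          congr 1
          push_cast
          ring
      _ ≤ ENNReal.ofReal (C * ε ^ τ) := by
          apply ENNReal.ofReal_le_ofReal
          have heq : ((N:ℝ)+1) * B = C0 * ε ^ τ := by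
            rw [hB, hC0]
            have h1 : ε/(c/2) = ε * (2/c) := by
              rw [div_div_eq_mul_div, mul_div_assoc]
            rw [h1, Real.mul_rpow hε.le (by positivity)]
            ring
          rw [heq]
          apply mul_le_mul_of_nonneg_right _ hεντ
          rw [hC]
          have : (0:ℝ) ≤ (b-a) * ((2/c) ^ τ) := mul_nonneg (by linarith) hpowc
          linarith
  · -- large ε: trivial bound
    have h1 : (1:ℝ) ≤ (2*ε/c) ^ τ := by
      apply Real.one_le_rpow _ hτ0.le
      rw [le_div_iff₀ hc0]
      linarith
    have h2 : (2*ε/c) ^ τ = (2/c) ^ τ * ε ^ τ := by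
      have : 2*ε/c = (2/c) * ε := by ring
      rw [this, Real.mul_rpow (by positivity) hε.le]
    calc volume {x ∈ Icc a b | |F x ω| < ε}
        ≤ volume (Icc a b) := measure_mono (sep_subset _ _)
      _ = ENNReal.ofReal (b - a) := Real.volume_Icc
      _ ≤ ENNReal.ofReal (C * ε ^ τ) := by
          apply ENNReal.ofReal_le_ofReal
          have h3 : b - a ≤ (b-a) * ((2/c) ^ τ * ε ^ τ) := by
            rw [← h2]
            nlinarith [h1]
          have h4 : (b-a) * ((2/c) ^ τ * ε ^ τ) ≤ C * ε ^ τ := by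
            rw [hC]
            have : (b-a) * ((2/c) ^ τ * ε ^ τ) = ((b-a) * (2/c) ^ τ) * ε ^ τ := by ring
            rw [this]
            apply mul_le_mul_of_nonneg_right _ hεντ
            linarith
          linarith
end

section
/- Let $\varepsilon \in (0,1)$ be such that $N = \varepsilon^{-1/2}$ is a positive integer. Define $f(x) = k\varepsilon^{1/2} - x$ for $|x - k\varepsilon^{1/2}| < \tfrac12\varepsilon^{1/2}$ ($k \in \mathbb{Z}$); $g(y) = k\varepsilon^{1/2} + k\varepsilon$ for $|y - k\varepsilon^{1/2}| < \tfrac12\varepsilon^{1/2}$; and $h(t) = n\varepsilon^{1/2} + n\varepsilon$ where $n \in \{0,\dots,N-1\}$, $k \in \mathbb{Z}$ are the unique integers with $|t - (k\varepsilon^{1/2} + n\varepsilon)| < \tfrac12\varepsilon$. Then the sublevel set $\mathcal{E} = \{(x,y) \in [0,1]^2 : |g(y) - h(x+y)| < \varepsilon \text{ and } |y - f(x) - h(x+y)| < \varepsilon\}$ satisfies $|\mathcal{E}| \ge c\,\varepsilon^{1/2}$ for an absolute constant $c > 0$. -/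
open MeasureTheory

/-- `f(x) = k√ε − x` where `k` is the nearest integer to `x/√ε`. -/
noncomputable def fCon (ε x : ℝ) : ℝ := (round (x / Real.sqrt ε) : ℤ) * Real.sqrt ε - x

/-- `g(y) = k√ε + kε` where `k` is the nearest integer to `y/√ε`. -/
noncomputable def gCon (ε y : ℝ) : ℝ :=
  ((round (y / Real.sqrt ε) : ℤ) : ℝ) * Real.sqrt ε +
    ((round (y / Real.sqrt ε) : ℤ) : ℝ) * ε

/-- `h(t) = n√ε + nε` where `n ∈ {0,…,N−1}` is the residue mod `N` of the
nearest integer to `t/ε`. -/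
noncomputable def hCon (ε : ℝ) (N : ℕ) (t : ℝ) : ℝ :=
  ((round (t / ε) % (N : ℤ) : ℤ) : ℝ) * Real.sqrt ε +
    ((round (t / ε) % (N : ℤ) : ℤ) : ℝ) * ε

/-!
Write `s = √ε = 1/N`. For `1 ≤ n ≤ N/2` and `1 ≤ j < N`, `cell ε (n, j)` is a parallelogram on
which `x + y` is within `ε/2` of `(n + j) s + n ε` and `y` ranges over a subinterval of
`(n s - s/2, n s + s/2)` of length at least `s/4`, short enough that `x` stays within `s/2` of `j s`.
There `f`, `g`, `h` read off the labels `j`, `n` and `(n + j) N + n ≡ n (mod N)`, so `g(y) = h(x + y)`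
exactly and `y - f(x) - h(x + y) = x + y - ((n + j) s + n ε)` is below `ε/2`. Distinct cells carry
distinct labels, hence are disjoint, and the `≍ N²` cells of area `≳ s ε` have total area
`≳ N² s ε = s`.
-/

open Set

lemma round_div_eq_of_abs_sub_lt {x s : ℝ} (hs : 0 < s) {k : ℤ} (h : |x - k * s| < s / 2) :
    round (x / s) = k := by
  rw [round_eq_iff, mem_Ico, le_div_iff₀ hs, div_lt_iff₀ hs]
  rw [abs_lt] at h
  constructor <;> linarith

lemma volume_shear_strip (a b c d : ℝ) :
    volume {p : ℝ × ℝ | p.2 ∈ Ioo a b ∧ p.1 + p.2 ∈ Ioo c d}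
      = ENNReal.ofReal (b - a) * ENNReal.ofReal (d - c) := by
  have hmp : MeasurePreserving (fun z : ℝ × ℝ => (z.2, z.2 + z.1)) volume volume := by
    rw [Measure.volume_eq_prod]
    exact measurePreserving_prod_add_swap volume volume
  have hset : {p : ℝ × ℝ | p.2 ∈ Ioo a b ∧ p.1 + p.2 ∈ Ioo c d}
      = (fun z : ℝ × ℝ => (z.2, z.2 + z.1)) ⁻¹' (Ioo a b ×ˢ Ioo c d) := by
    ext p
    simp [add_comm]
  rw [hset, hmp.measure_preimage (measurableSet_Ioo.prod measurableSet_Ioo).nullMeasurableSet,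
    Measure.volume_eq_prod, Measure.prod_prod, Real.volume_Ioo, Real.volume_Ioo]

noncomputable def cell (ε : ℝ) (q : ℕ × ℕ) : Set (ℝ × ℝ) :=
  {p | p.2 ∈ Ioo (q.1 * √ε - √ε / 2 + q.1 * ε + ε / 2) (q.1 * √ε + √ε / 2) ∧
    p.1 + p.2 ∈ Ioo ((q.1 + q.2) * √ε + q.1 * ε - ε / 2) ((q.1 + q.2) * √ε + q.1 * ε + ε / 2)}

def cellIndices (N : ℕ) : Finset (ℕ × ℕ) :=
  Finset.Icc 1 (N / 2) ×ˢ Finset.Icc 1 (N - 1)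

noncomputable def sublevelSet (ε : ℝ) (N : ℕ) : Set (ℝ × ℝ) :=
  {p | p ∈ Icc (0:ℝ) 1 ×ˢ Icc (0:ℝ) 1 ∧
    |gCon ε p.2 - hCon ε N (p.1 + p.2)| < ε ∧
    |p.2 - fCon ε p.1 - hCon ε N (p.1 + p.2)| < ε}

section Cells

variable {ε : ℝ} {N : ℕ} {q : ℕ × ℕ} {p : ℝ × ℝ}

lemma measurableSet_cell : MeasurableSet (cell ε q) :=
  (measurable_snd measurableSet_Ioo).inter ((measurable_fst.add measurable_snd) measurableSet_Ioo)

lemma abs_sub_lt_of_mem_cell (hε : 0 ≤ ε) (hq : 1 ≤ q.1) (hp : p ∈ cell ε q) :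
    |p.2 - q.1 * √ε| < √ε / 2 ∧ |p.1 - q.2 * √ε| < √ε / 2 := by
  have hqε : ε ≤ q.1 * ε := le_mul_of_one_le_left hε (mod_cast hq)
  obtain ⟨⟨hy₁, hy₂⟩, hu₁, hu₂⟩ := hp
  rw [abs_lt, abs_lt]
  exact ⟨⟨by linarith, by linarith⟩, by linarith, by linarith⟩

lemma round_of_mem_cell (hε : 0 < ε) (hq : 1 ≤ q.1) (hp : p ∈ cell ε q) :
    round (p.2 / √ε) = q.1 ∧ round (p.1 / √ε) = q.2 := by
  obtain ⟨hy, hx⟩ := abs_sub_lt_of_mem_cell hε.le hq hp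
  exact ⟨round_div_eq_of_abs_sub_lt (Real.sqrt_pos.2 hε) (mod_cast hy),
    round_div_eq_of_abs_sub_lt (Real.sqrt_pos.2 hε) (mod_cast hx)⟩

lemma cell_subset_preimage_round (hε : 0 < ε) (hq : 1 ≤ q.1) :
    cell ε q ⊆ (fun p => ((round (p.2 / √ε)).toNat, (round (p.1 / √ε)).toNat)) ⁻¹' {q} := by
  intro p hp
  obtain ⟨hy, hx⟩ := round_of_mem_cell hε hq hp
  simp [hy, hx]

lemma round_add_of_mem_cell (hε : 0 < ε) (hN : N * √ε = 1) (hp : p ∈ cell ε q) :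
    round ((p.1 + p.2) / ε) = (q.1 + q.2) * N + q.1 := by
  apply round_div_eq_of_abs_sub_lt hε
  have hcenter : (((q.1 + q.2) * N + q.1 : ℤ) : ℝ) * ε = (q.1 + q.2) * √ε + q.1 * ε := by
    push_cast
    linear_combination (q.1 + q.2 : ℝ) * (√ε * hN - N * Real.mul_self_sqrt hε.le)
  obtain ⟨-, hu₁, hu₂⟩ := hp
  rw [hcenter, abs_lt]
  constructor <;> linarith

lemma mem_cellIndices : q ∈ cellIndices N ↔ (1 ≤ q.1 ∧ q.1 ≤ N / 2) ∧ 1 ≤ q.2 ∧ q.2 ≤ N - 1 := by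
  simp [cellIndices, Finset.mem_product]

lemma card_cellIndices : (cellIndices N).card = N / 2 * (N - 1) := by
  simp [cellIndices]

lemma mem_sublevelSet_of_mem_cell (hε : 0 < ε) (hN : N * √ε = 1) (hq : q ∈ cellIndices N)
    (hp : p ∈ cell ε q) : p ∈ sublevelSet ε N := by
  obtain ⟨⟨hn₁, hn₂⟩, hj₁, hj₂⟩ := mem_cellIndices.1 hq
  have hn : ((q.1 + 1 : ℕ) : ℝ) * √ε ≤ N * √ε := by gcongr; omega
  have hj : ((q.2 + 1 : ℕ) : ℝ) * √ε ≤ N * √ε := by gcongr; omega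
  have hn₀ : √ε ≤ q.1 * √ε := le_mul_of_one_le_left (Real.sqrt_nonneg ε) (mod_cast hn₁)
  have hj₀ : √ε ≤ q.2 * √ε := le_mul_of_one_le_left (Real.sqrt_nonneg ε) (mod_cast hj₁)
  push_cast at hn hj
  obtain ⟨hy, hx⟩ := round_of_mem_cell hε hn₁ hp
  have hmod : ((q.1 + q.2) * N + q.1 : ℤ) % N = q.1 := by
    rw [add_comm, Int.add_mul_emod_self_right]
    exact Int.emod_eq_of_lt (by positivity) (by omega)
  obtain ⟨hy', hx'⟩ := abs_sub_lt_of_mem_cell hε.le hn₁ hp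
  obtain ⟨hu₁, hu₂⟩ := hp.2
  rw [abs_lt] at hy' hx'
  refine ⟨⟨⟨by linarith, by linarith⟩, by linarith, by linarith⟩, ?_, ?_⟩
  · rw [gCon, hCon, hy, round_add_of_mem_cell hε hN hp, hmod, sub_self, abs_zero]
    exact hε
  · rw [fCon, hCon, hx, round_add_of_mem_cell hε hN hp, hmod, abs_lt]
    push_cast
    constructor <;> linarith

lemma ofReal_le_volume_cell (hε : 0 < ε) (hN : N * √ε = 1) (hN₂ : 2 ≤ N) (hq : 2 * q.1 ≤ N) :
    ENNReal.ofReal (√ε * ε / 4) ≤ volume (cell ε q) := by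
  have hNε : (N : ℝ) * ε = √ε := by
    linear_combination √ε * hN - N * Real.mul_self_sqrt hε.le
  have hq' : 2 * (q.1 : ℝ) * ε ≤ √ε := by
    rw [← hNε]; gcongr; exact_mod_cast hq
  have hε₂ : ε ≤ √ε / 2 := by
    have : (2 : ℝ) * √ε ≤ N * √ε := by gcongr; exact_mod_cast hN₂
    nlinarith [Real.mul_self_sqrt hε.le, Real.sqrt_nonneg ε]
  rw [cell, volume_shear_strip, ← ENNReal.ofReal_mul (by linarith)]
  exact ENNReal.ofReal_le_ofReal (by nlinarith)

lemma sqrt_div_le_card_cellIndices_mul (hε : 0 < ε) (hN : N * √ε = 1) (hN₂ : 2 ≤ N) :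
    √ε / 32 ≤ (cellIndices N).card * (√ε * ε / 4) := by
  have hcard : N * N ≤ 8 * (cellIndices N).card := by
    rw [card_cellIndices]
    calc N * N ≤ (4 * (N / 2)) * (2 * (N - 1)) := Nat.mul_le_mul (by omega) (by omega)
      _ = 8 * (N / 2 * (N - 1)) := by ring
  have hN₂ε : (N : ℝ) * N * ε = 1 := by
    linear_combination (N * √ε + 1) * hN - N * N * Real.mul_self_sqrt hε.le
  have hcard' : (N : ℝ) * N ≤ 8 * (cellIndices N).card := by exact_mod_cast hcard
  calc √ε / 32 = (N * N) * (√ε * ε / 32) := by linear_combination (-√ε / 32) * hN₂ε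
    _ ≤ 8 * (cellIndices N).card * (√ε * ε / 32) := by gcongr
    _ = (cellIndices N).card * (√ε * ε / 4) := by ring

end Cells

theorem stmt14 :
    ∃ c : ℝ, 0 < c ∧ ∀ (ε : ℝ) (N : ℕ), 0 < ε → ε < 1 → 0 < N →
      (N : ℝ) = (Real.sqrt ε)⁻¹ →
      ENNReal.ofReal (c * Real.sqrt ε) ≤
        volume {p : ℝ × ℝ | p ∈ Set.Icc (0:ℝ) 1 ×ˢ Set.Icc (0:ℝ) 1 ∧
          |gCon ε p.2 - hCon ε N (p.1 + p.2)| < ε ∧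
          |p.2 - fCon ε p.1 - hCon ε N (p.1 + p.2)| < ε} := by
  refine ⟨1 / 32, by norm_num, fun ε N hε hε₁ _ hNε => ?_⟩
  have hs : 0 < √ε := Real.sqrt_pos.2 hε
  have hN : (N : ℝ) * √ε = 1 := by rw [hNε, inv_mul_cancel₀ hs.ne']
  have hN₂ : 2 ≤ N := by
    have : √ε < 1 := (Real.sqrt_lt' one_pos).2 (by linarith)
    have : (1 : ℝ) < N := by nlinarith
    exact_mod_cast this
  calc ENNReal.ofReal (1 / 32 * √ε)
      ≤ (cellIndices N).card • ENNReal.ofReal (√ε * ε / 4) := by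
        rw [nsmul_eq_mul, ← ENNReal.ofReal_natCast, ← ENNReal.ofReal_mul (by positivity)]
        exact ENNReal.ofReal_le_ofReal (by linarith [sqrt_div_le_card_cellIndices_mul hε hN hN₂])
    _ ≤ ∑ q ∈ cellIndices N, volume (cell ε q) :=
        Finset.card_nsmul_le_sum _ _ _ fun q hq =>
          ofReal_le_volume_cell hε hN hN₂ (by have := (mem_cellIndices.1 hq).1.2; omega)
    _ = volume (⋃ q ∈ cellIndices N, cell ε q) := by
        refine (measure_biUnion_finset ?_ fun _ _ => measurableSet_cell).symm
        exact (pairwiseDisjoint_fiber _ _).mono_on fun q hq =>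
          cell_subset_preimage_round hε (mem_cellIndices.1 hq).1.1
    _ ≤ volume (sublevelSet ε N) :=
        measure_mono (iUnion₂_subset fun _ hq _ => mem_sublevelSet_of_mem_cell hε hN hq)
end

section
/- With $f, g, h, \varepsilon, N$ as in the multiprogression construction, fix integers $m \in \mathbb{Z}$ and $n \in \{0,\dots,N-1\}$ and let $\mathcal{E}(m,n)$ be the set of $(x,y) \in \mathbb{R}^2$ satisfying $|y - n\varepsilon^{1/2}| < \tfrac12\varepsilon^{1/2}$, $|x - (m-n)\varepsilon^{1/2}| < \tfrac12\varepsilon^{1/2}$, and $|x + y - (m\varepsilon^{1/2} + n\varepsilon)| < \tfrac12\varepsilon$. Then for every $(x,y) \in \mathcal{E}(m,n)$ one has $g(y) - h(x+y) = 0$ and $|y - f(x) - h(x+y)| < \tfrac12\varepsilon$. -/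
theorem round_div_eq_of_abs_sub_mul_lt {α : Type*} [Field α] [LinearOrder α]
    [IsStrictOrderedRing α] [FloorRing α] {x a : α} {k : ℤ} (ha : 0 < a)
    (h : |x - k * a| < a / 2) : round (x / a) = k := by
  rw [abs_lt] at h
  rw [round_eq_iff, Set.mem_Ico, le_div_iff₀ ha, div_lt_iff₀ ha]
  constructor <;> linarith

theorem hCon_eq_of_round_eq {ε t : ℝ} {N : ℕ} {m n : ℤ} (hn0 : 0 ≤ n) (hnN : n < N)
    (h : round (t / ε) = n + N * m) : hCon ε N t = n * Real.sqrt ε + n * ε := by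
  rw [hCon, h, Int.add_mul_emod_self_left, Int.emod_eq_of_lt hn0 hnN]

theorem sqrt_eq_natCast_mul_self {ε : ℝ} {N : ℕ} (hε : 0 < ε)
    (hNε : (N : ℝ) = (Real.sqrt ε)⁻¹) : Real.sqrt ε = N * ε := by
  have hs : Real.sqrt ε ≠ 0 := (Real.sqrt_pos.2 hε).ne'
  rw [hNε, eq_inv_mul_iff_mul_eq₀ hs, Real.mul_self_sqrt hε.le]

theorem stmt15_general (ε : ℝ) (N : ℕ) (hε : 0 < ε)
    (hNε : (N : ℝ) = (Real.sqrt ε)⁻¹)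
    (m n : ℤ) (hn0 : 0 ≤ n) (hnN : n < (N : ℤ)) (x y : ℝ)
    (h₁ : |y - (n : ℝ) * Real.sqrt ε| < Real.sqrt ε / 2)
    (h₂ : |x - ((m : ℝ) - (n : ℝ)) * Real.sqrt ε| < Real.sqrt ε / 2)
    (h₃ : |x + y - ((m : ℝ) * Real.sqrt ε + (n : ℝ) * ε)| < ε / 2) :
    gCon ε y - hCon ε N (x + y) = 0 ∧
      |y - fCon ε x - hCon ε N (x + y)| < ε / 2 := by
  have hs : 0 < Real.sqrt ε := Real.sqrt_pos.2 hε
  have hy : round (y / Real.sqrt ε) = n := round_div_eq_of_abs_sub_mul_lt hs h₁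
  have hx : round (x / Real.sqrt ε) = m - n :=
    round_div_eq_of_abs_sub_mul_lt hs (by push_cast; exact h₂)
  have hlattice : ((n + N * m : ℤ) : ℝ) * ε = m * Real.sqrt ε + n * ε := by
    rw [sqrt_eq_natCast_mul_self hε hNε]; push_cast; ring
  have hxy : round ((x + y) / ε) = n + N * m :=
    round_div_eq_of_abs_sub_mul_lt hε (by rwa [hlattice])
  rw [hCon_eq_of_round_eq hn0 hnN hxy, gCon, fCon, hy, hx]
  refine ⟨sub_self _, ?_⟩
  convert h₃ using 2
  push_cast
  ring

theorem stmt15 (ε : ℝ) (N : ℕ) (hε : 0 < ε) (hε1 : ε < 1) (hN : 0 < N)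
    (hNε : (N : ℝ) = (Real.sqrt ε)⁻¹)
    (m n : ℤ) (hn0 : 0 ≤ n) (hnN : n < (N : ℤ)) (x y : ℝ)
    (h₁ : |y - (n : ℝ) * Real.sqrt ε| < Real.sqrt ε / 2)
    (h₂ : |x - ((m : ℝ) - (n : ℝ)) * Real.sqrt ε| < Real.sqrt ε / 2)
    (h₃ : |x + y - ((m : ℝ) * Real.sqrt ε + (n : ℝ) * ε)| < ε / 2) :
    gCon ε y - hCon ε N (x + y) = 0 ∧
      |y - fCon ε x - hCon ε N (x + y)| < ε / 2 :=
  stmt15_general ε N hε hNε m n hn0 hnN x y h₁ h₂ h₃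
end

section
/- Let $b : [0,1]^2 \to \mathbb{R}$ be a $C^2$ nowhere vanishing function, and suppose the determinant $b(x-s, y+s)\,b(x',y) - b(x,y)\,b(x'-s, y+s)$ vanishes identically for all $(x, x', s, y)$ in an open set. Then locally $b$ factors as $b(x,y) = h(x+y)\,k(y)$ for some smooth nowhere vanishing functions $h, k$ of one variable. -/
/-! Fixing `x' = x₀'` and choosing the shift `s = c - y` that moves every point `(x, y)` to a
fixed row `y = c`, the vanishing determinant reads
`b (x + y - c, c) * b (x₀', y) = b (x, y) * b (x₀' + y - c, c)`, so
`b (x, y) = h (x + y) * k y` with `h t = b (t - c, c)` and `k y = b (x₀', y) / b (x₀' + y - c, c)`.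
Taking `c = y₀ + s₀` for a point `(x₀, x₀', s₀, y₀)` of `W`, the points `(x, y)` for which this
choice of `(x', s)` stays in `W` form an open neighbourhood of `(x₀, y₀)`. -/

lemma eq_mul_div_of_det_eq_zero {K : Type*} [Field K] {b : K × K → K} {x x' s y : K}
    (hne : b (x' - s, y + s) ≠ 0)
    (h : b (x - s, y + s) * b (x', y) - b (x, y) * b (x' - s, y + s) = 0) :
    b (x, y) = b (x - s, y + s) * (b (x', y) / b (x' - s, y + s)) := by
  field_simp
  linear_combination -h

theorem stmt16 (b : ℝ × ℝ → ℝ) (hb : ContDiff ℝ 2 b) (hnv : ∀ q, b q ≠ 0)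
    (W : Set (ℝ × ℝ × ℝ × ℝ)) (hW : IsOpen W) (hWne : W.Nonempty)
    (hdet : ∀ w ∈ W,
      b (w.1 - w.2.2.1, w.2.2.2 + w.2.2.1) * b (w.2.1, w.2.2.2) -
        b (w.1, w.2.2.2) * b (w.2.1 - w.2.2.1, w.2.2.2 + w.2.2.1) = 0) :
    ∃ (V : Set (ℝ × ℝ)) (h k : ℝ → ℝ), IsOpen V ∧ V.Nonempty ∧
      V ⊆ {q : ℝ × ℝ | ∃ x' s : ℝ, (q.1, x', s, q.2) ∈ W} ∧
      ContDiff ℝ 2 h ∧ ContDiff ℝ 2 k ∧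
      ∀ q ∈ V, h (q.1 + q.2) ≠ 0 ∧ k q.2 ≠ 0 ∧ b q = h (q.1 + q.2) * k q.2 := by
  obtain ⟨⟨x₀, x₀', s₀, y₀⟩, hp⟩ := hWne
  set c := y₀ + s₀
  have hrow : ∀ x y : ℝ, (x - (c - y), y + (c - y)) = (x + y - c, c) := fun x y => by
    ext <;> ring
  refine ⟨{q | (q.1, x₀', c - q.2, q.2) ∈ W}, fun t => b (t - c, c),
    fun y => b (x₀', y) / b (x₀' + y - c, c), hW.preimage (by fun_prop),
    ⟨(x₀, y₀), by simpa [c] using hp⟩, fun q hq => ⟨_, _, hq⟩,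
    hb.comp (by fun_prop), (hb.comp (by fun_prop)).div (hb.comp (by fun_prop)) fun _ => hnv _,
    fun ⟨x, y⟩ hq => ⟨hnv _, div_ne_zero (hnv _) (hnv _), ?_⟩⟩
  simpa only [hrow] using eq_mul_div_of_det_eq_zero (hnv _) (hdet _ hq)
end
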